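/- arXiv:math/9302206 — 5 statements merged into one kernel-verified Lean document; each statement's English description precedes it below -/
import Mathlib

section
/- Let X be a maximal sequence space. Then X⁺⁺ = X with equal norms, i.e. the second sequence dual of X coincides isometrically with X. -/
noncomputable section

/-- Truncation to the first `n` coordinates. -/
def trunc (σ : ℕ → ℝ) (n : ℕ) : ℕ → ℝ := fun k => if k < n then σ k else 0

/-- A maximal sequence space: a Banach space `X` of scalar sequences with
`ℓ¹ ⊆ X ⊆ ℓ∞`, `‖e_k‖ = 1`, the solidity (ideal) property, and the maximality
(Fatou) property expressed through truncations. -/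
structure MaxSeqSpace where
  Mem : (ℕ → ℝ) → Prop
  N : (ℕ → ℝ) → ℝ
  mem_add : ∀ {σ τ : ℕ → ℝ}, Mem σ → Mem τ → Mem (σ + τ)
  mem_smul : ∀ (c : ℝ) {σ : ℕ → ℝ}, Mem σ → Mem (c • σ)
  n_nonneg : ∀ σ, 0 ≤ N σ
  n_eq_zero : ∀ {σ}, Mem σ → (N σ = 0 ↔ σ = 0)
  n_add : ∀ {σ τ}, Mem σ → Mem τ → N (σ + τ) ≤ N σ + N τ
  n_smul : ∀ (c : ℝ) (σ : ℕ → ℝ), N (c • σ) = |c| * N σ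
  complete : ∀ f : ℕ → (ℕ → ℝ), (∀ m, Mem (f m)) →
    (∀ ε : ℝ, 0 < ε → ∃ M, ∀ m k, M ≤ m → M ≤ k → N (f m - f k) < ε) →
    ∃ g, Mem g ∧ ∀ ε : ℝ, 0 < ε → ∃ M, ∀ m, M ≤ m → N (f m - g) < ε
  l1_subset : ∀ σ : ℕ → ℝ, Summable (fun k => |σ k|) → Mem σ
  subset_linf : ∀ σ, Mem σ → BddAbove (Set.range fun k => |σ k|)
  n_single : ∀ k : ℕ, N (Pi.single k 1) = 1
  solid : ∀ (α σ : ℕ → ℝ), Mem σ → (∀ k, |α k| ≤ 1) → Mem (α * σ) ∧ N (α * σ) ≤ N σ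
  maximal : ∀ σ, BddAbove (Set.range fun n => N (trunc σ n)) ↔ Mem σ
  n_sup : ∀ σ, Mem σ → N σ = ⨆ n, N (trunc σ n)

/-- A maximal symmetric sequence space: additionally rearrangement invariant. -/
structure MaxSymSeqSpace extends MaxSeqSpace where
  symm : ∀ (σ : ℕ → ℝ) (π : Equiv.Perm ℕ), Mem σ → Mem (σ ∘ π) ∧ N (σ ∘ π) = N σ

/-- The sequence in `ℓ∞` whose first `n` coordinates are given by `v` and
which vanishes afterwards, i.e. `∑_{k<n} v_k e_k`. -/
def seqOf (n : ℕ) (v : Fin n → ℝ) : ℕ → ℝ := fun i => if h : i < n then v ⟨i, h⟩ else 0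

end

noncomputable section

/-- Membership in the sequence dual `X⁺`. -/
def dualMem (Mem : (ℕ → ℝ) → Prop) (N : (ℕ → ℝ) → ℝ) (τ : ℕ → ℝ) : Prop :=
  ∃ C : ℝ, ∀ σ : ℕ → ℝ, Mem σ → N σ ≤ 1 → ∀ n : ℕ,
    |∑ k ∈ Finset.range n, σ k * τ k| ≤ C

/-- The dual norm `‖τ‖₊ = sup_{σ ∈ B_X} |∑_k σ_k τ_k|`. -/
def dualN (Mem : (ℕ → ℝ) → Prop) (N : (ℕ → ℝ) → ℝ) (τ : ℕ → ℝ) : ℝ :=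
  sSup {r : ℝ | ∃ (σ : ℕ → ℝ) (n : ℕ), Mem σ ∧ N σ ≤ 1 ∧
    r = |∑ k ∈ Finset.range n, σ k * τ k|}

namespace StmtAux

variable (X : MaxSeqSpace)

lemma memZero : X.Mem 0 := X.l1_subset 0 (by simpa using summable_zero)

lemma nZero : X.N 0 = 0 := (X.n_eq_zero (memZero X)).mpr rfl

lemma memSeqOf (n : ℕ) (v : Fin n → ℝ) : X.Mem (seqOf n v) := by
  apply X.l1_subset
  apply summable_of_ne_finset_zero (s := Finset.range n)
  intro k hk
  have h : ¬ k < n := by simpa using hk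
  simp [seqOf, h]

lemma seqOf_add (n : ℕ) (v w : Fin n → ℝ) : seqOf n (v + w) = seqOf n v + seqOf n w := by
  funext k; by_cases h : k < n <;> simp [seqOf, h]

lemma seqOf_smul (n : ℕ) (c : ℝ) (v : Fin n → ℝ) : seqOf n (c • v) = c • seqOf n v := by
  funext k; by_cases h : k < n <;> simp [seqOf, h]

lemma n_trunc_le (σ : ℕ → ℝ) (hσ : X.Mem σ) (n : ℕ) :
    X.Mem (trunc σ n) ∧ X.N (trunc σ n) ≤ X.N σ := by
  have h : trunc σ n = (fun k => if k < n then (1:ℝ) else 0) * σ := by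
    funext k; by_cases h : k < n <;> simp [trunc, h]
  rw [h]
  exact X.solid _ _ hσ (fun k => by by_cases h : k < n <;> simp [h])

lemma sum_le_of_dual (τ : ℕ → ℝ) (hτ : dualMem X.Mem X.N τ) (hτ1 : dualN X.Mem X.N τ ≤ 1)
    (σ : ℕ → ℝ) (hσ : X.Mem σ) (m : ℕ) : |∑ k ∈ Finset.range m, σ k * τ k| ≤ X.N σ := by
  obtain ⟨C, hC⟩ := hτ
  have hbdd : BddAbove {r : ℝ | ∃ (σ : ℕ → ℝ) (n : ℕ), X.Mem σ ∧ X.N σ ≤ 1 ∧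
      r = |∑ k ∈ Finset.range n, σ k * τ k|} := by
    refine ⟨C, ?_⟩; rintro r ⟨σ', n, h1, h2, rfl⟩; exact hC σ' h1 h2 n
  by_cases h0 : X.N σ = 0
  · have hz : σ = 0 := (X.n_eq_zero hσ).mp h0
    simpa [hz] using X.n_nonneg 0
  · have hpos : 0 < X.N σ := lt_of_le_of_ne (X.n_nonneg σ) (Ne.symm h0)
    have hmem : X.Mem ((X.N σ)⁻¹ • σ) := X.mem_smul _ hσ
    have hnorm : X.N ((X.N σ)⁻¹ • σ) ≤ 1 := by
      rw [X.n_smul, abs_of_pos (inv_pos.mpr hpos), inv_mul_cancel₀ h0]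
    have hin : |∑ k ∈ Finset.range m, ((X.N σ)⁻¹ • σ) k * τ k| ≤ dualN X.Mem X.N τ :=
      le_csSup hbdd ⟨(X.N σ)⁻¹ • σ, m, hmem, hnorm, rfl⟩
    have heq : |∑ k ∈ Finset.range m, ((X.N σ)⁻¹ • σ) k * τ k|
        = (X.N σ)⁻¹ * |∑ k ∈ Finset.range m, σ k * τ k| := by
      simp only [Pi.smul_apply, smul_eq_mul, mul_assoc, ← Finset.mul_sum, abs_mul,
        abs_of_pos (inv_pos.mpr hpos)]
    rw [heq] at hin
    have := (inv_mul_le_iff₀ hpos).mp (le_trans hin hτ1)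
    linarith


lemma dual_of_bound (τ : ℕ → ℝ)
    (h : ∀ σ', X.Mem σ' → X.N σ' ≤ 1 → ∀ m, |∑ k ∈ Finset.range m, σ' k * τ k| ≤ 1) :
    dualMem X.Mem X.N τ ∧ dualN X.Mem X.N τ ≤ 1 :=
  ⟨⟨1, h⟩, Real.sSup_le (by rintro r ⟨σ', m, h1, h2, rfl⟩; exact h σ' h1 h2 m) zero_le_one⟩

lemma exists_norming (σ : ℕ → ℝ) (n : ℕ) :
    ∃ τ : ℕ → ℝ, dualMem X.Mem X.N τ ∧ dualN X.Mem X.N τ ≤ 1 ∧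
      ∑ k ∈ Finset.range n, τ k * σ k = X.N (trunc σ n) := by
  by_cases htr : trunc σ n = 0
  · refine ⟨0, (dual_of_bound X 0 (by simp)).1, (dual_of_bound X 0 (by simp)).2, ?_⟩
    rw [htr, nZero X]; simp
  · -- nonzero case
    set v₀ : Fin n → ℝ := fun i => σ i.val with hv₀def
    have hv₀ : v₀ ≠ 0 := by
      intro h
      apply htr
      funext k
      by_cases hk : k < n
      · have := congrFun h ⟨k, hk⟩
        simpa [trunc, hk, hv₀def] using this
      · simp [trunc, hk]
    set p : (Fin n → ℝ) → ℝ := fun v => X.N (seqOf n v) with hpdef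
    have p_nonneg : ∀ v, 0 ≤ p v := fun v => X.n_nonneg _
    have p_abs : ∀ (c : ℝ) v, p (c • v) = |c| * p v := by
      intro c v; rw [hpdef]; simp only []; rw [seqOf_smul, X.n_smul]
    have p_hom : ∀ c : ℝ, 0 < c → ∀ v, p (c • v) = c * p v := by
      intro c hc v; rw [p_abs, abs_of_pos hc]
    have p_add : ∀ v w, p (v + w) ≤ p v + p w := by
      intro v w; rw [hpdef]; simp only []; rw [seqOf_add]
      exact X.n_add (memSeqOf X n v) (memSeqOf X n w)
    have hf : ∀ x : (LinearPMap.mkSpanSingleton (K := ℝ) (L := ℝ) (σ := RingHom.id ℝ) v₀ (p v₀) hv₀).domain,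
        (LinearPMap.mkSpanSingleton (K := ℝ) (L := ℝ) (σ := RingHom.id ℝ) v₀ (p v₀) hv₀) x ≤ p x := by
      rintro ⟨x, hx⟩
      obtain ⟨c, rfl⟩ := Submodule.mem_span_singleton.mp hx
      erw [LinearPMap.mkSpanSingleton'_apply]
      rw [smul_eq_mul, p_abs]
      exact mul_le_mul_of_nonneg_right (le_abs_self c) (p_nonneg v₀)
    obtain ⟨g, hg_eq, hg_le⟩ := exists_extension_of_le_sublinear
      (LinearPMap.mkSpanSingleton (K := ℝ) (L := ℝ) (σ := RingHom.id ℝ) v₀ (p v₀) hv₀) p p_hom p_add hf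
    have habs : ∀ v, |g v| ≤ p v := by
      intro v
      refine abs_le.mpr ⟨?_, hg_le v⟩
      have h1 := hg_le (-v)
      rw [map_neg] at h1
      have h2 : p (-v) = p v := by
        have := p_abs (-1) v; simpa using this
      linarith
    set τ : ℕ → ℝ := fun k => if h : k < n then g (Pi.single (⟨k, h⟩ : Fin n) 1) else 0
      with hτdef
    have claimA' : ∀ w : Fin n → ℝ,
        ∑ k ∈ Finset.range n, seqOf n w k * τ k = g w := by
      intro w
      rw [← Fin.sum_univ_eq_sum_range (fun k => seqOf n w k * τ k) n]
      have hterm : ∀ i : Fin n, seqOf n w i.val * τ i.val = w i * g (Pi.single i 1) := by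
        intro i
        rw [hτdef]
        simp [seqOf, i.isLt]
      rw [Finset.sum_congr rfl fun i _ => hterm i]
      calc ∑ i : Fin n, w i * g (Pi.single i 1)
          = ∑ i : Fin n, g (w i • (Pi.single i 1 : Fin n → ℝ)) := by
            simp [map_smul, smul_eq_mul]
        _ = g (∑ i : Fin n, w i • (Pi.single i 1 : Fin n → ℝ)) := (map_sum g _ _).symm
        _ = g w := by
            congr 1
            funext j
            simp [Finset.sum_apply, Pi.single_apply]
    have claimA : ∀ (σ' : ℕ → ℝ) (m : ℕ),
        ∑ k ∈ Finset.range m, σ' k * τ k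
          = g (fun i : Fin n => if i.val < m then σ' i.val else 0) := by
      intro σ' m
      set w : Fin n → ℝ := fun i => if i.val < m then σ' i.val else 0 with hwdef
      have e1 : ∑ k ∈ Finset.range m, σ' k * τ k
          = ∑ k ∈ Finset.range (min m n), σ' k * τ k := by
        symm
        apply Finset.sum_subset (Finset.range_subset_range.mpr (min_le_left m n))
        intro k hk hk'
        have hkm : k < m := Finset.mem_range.mp hk
        have hkn : ¬ k < n := by
          have := Finset.mem_range.not.mp hk'
          simp only [lt_min_iff, not_and_or] at this
          tauto
        rw [hτdef]; simp [hkn]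
      have e2 : ∑ k ∈ Finset.range (min m n), seqOf n w k * τ k
          = ∑ k ∈ Finset.range n, seqOf n w k * τ k := by
        apply Finset.sum_subset (Finset.range_subset_range.mpr (min_le_right m n))
        intro k hk hk'
        have hkn : k < n := Finset.mem_range.mp hk
        have hkm : ¬ k < m := by
          have := Finset.mem_range.not.mp hk'
          simp only [lt_min_iff, not_and_or] at this
          tauto
        have : seqOf n w k = 0 := by simp [seqOf, hkn, hwdef, hkm]
        rw [this, zero_mul]
      have e3 : ∀ k ∈ Finset.range (min m n), σ' k * τ k = seqOf n w k * τ k := by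
        intro k hk
        obtain ⟨hkm, hkn⟩ := lt_min_iff.mp (Finset.mem_range.mp hk)
        congr 1
        simp [seqOf, hkn, hwdef, hkm]
      rw [e1, Finset.sum_congr rfl e3, e2, claimA']
    have hbound : ∀ σ', X.Mem σ' → X.N σ' ≤ 1 → ∀ m,
        |∑ k ∈ Finset.range m, σ' k * τ k| ≤ 1 := by
      intro σ' h1 h2 m
      rw [claimA σ' m]
      refine le_trans (habs _) ?_
      have hseq : seqOf n (fun i : Fin n => if i.val < m then σ' i.val else 0)
          = (fun k => if k < m ∧ k < n then (1:ℝ) else 0) * σ' := by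
        funext k
        by_cases hkn : k < n
        · by_cases hkm : k < m <;> simp [seqOf, hkn, hkm]
        · simp [seqOf, hkn]
      have hsolid := (X.solid (fun k => if k < m ∧ k < n then (1:ℝ) else 0) σ' h1
        (fun k => by by_cases h : k < m ∧ k < n <;> simp [h])).2
      show X.N (seqOf n (fun i : Fin n => if i.val < m then σ' i.val else 0)) ≤ 1
      rw [hseq]
      exact le_trans hsolid h2
    obtain ⟨hd1, hd2⟩ := dual_of_bound X τ hbound
    refine ⟨τ, hd1, hd2, ?_⟩
    have hcomm : ∑ k ∈ Finset.range n, τ k * σ k = ∑ k ∈ Finset.range n, σ k * τ k := by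
      exact Finset.sum_congr rfl fun k _ => mul_comm _ _
    rw [hcomm, claimA σ n]
    have hw : (fun i : Fin n => if i.val < n then σ i.val else 0) = v₀ := by
      funext i; simp [i.isLt, hv₀def]
    rw [hw]
    have hgv : g v₀ = p v₀ :=
      (hg_eq ⟨v₀, Submodule.mem_span_singleton_self v₀⟩).trans
        (LinearPMap.mkSpanSingleton_apply ℝ ℝ (σ := RingHom.id ℝ) hv₀ (p v₀))
    rw [hgv]
    have hsv : seqOf n v₀ = trunc σ n := by
      funext k; by_cases h : k < n <;> simp [seqOf, trunc, h, hv₀def]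
    show X.N (seqOf n v₀) = X.N (trunc σ n)
    rw [hsv]

end StmtAux

/-- `X⁺⁺ = X` with equal norms: the second sequence dual of a maximal sequence
space coincides isometrically with the space itself. -/
theorem stmt5 (X : MaxSeqSpace) :
    (∀ σ, dualMem (dualMem X.Mem X.N) (dualN X.Mem X.N) σ ↔ X.Mem σ) ∧
    (∀ σ, X.Mem σ → dualN (dualMem X.Mem X.N) (dualN X.Mem X.N) σ = X.N σ) := by
  constructor
  · intro σ
    constructor
    · rintro ⟨C, hC⟩
      rw [← X.maximal]
      refine ⟨C, ?_⟩
      rintro r ⟨n, rfl⟩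
      obtain ⟨τ, h1, h2, h3⟩ := StmtAux.exists_norming X σ n
      calc X.N (trunc σ n) = ∑ k ∈ Finset.range n, τ k * σ k := h3.symm
        _ ≤ |∑ k ∈ Finset.range n, τ k * σ k| := le_abs_self _
        _ ≤ C := hC τ h1 h2 n
    · intro hσ
      refine ⟨X.N σ, fun τ h1 h2 m => ?_⟩
      have := StmtAux.sum_le_of_dual X τ h1 h2 σ hσ m
      have hcomm : ∑ k ∈ Finset.range m, τ k * σ k = ∑ k ∈ Finset.range m, σ k * τ k :=
        Finset.sum_congr rfl fun k _ => mul_comm _ _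
      rw [hcomm]; exact this
  · intro σ hσ
    have hub : ∀ r ∈ {r : ℝ | ∃ (τ : ℕ → ℝ) (m : ℕ), dualMem X.Mem X.N τ ∧
        dualN X.Mem X.N τ ≤ 1 ∧ r = |∑ k ∈ Finset.range m, τ k * σ k|}, r ≤ X.N σ := by
      rintro r ⟨τ, m, h1, h2, rfl⟩
      have := StmtAux.sum_le_of_dual X τ h1 h2 σ hσ m
      have hcomm : ∑ k ∈ Finset.range m, τ k * σ k = ∑ k ∈ Finset.range m, σ k * τ k :=
        Finset.sum_congr rfl fun k _ => mul_comm _ _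
      rw [hcomm]; exact this
    apply le_antisymm
    · exact Real.sSup_le hub (X.n_nonneg σ)
    · rw [X.n_sup σ hσ]
      apply ciSup_le
      intro n
      obtain ⟨τ, h1, h2, h3⟩ := StmtAux.exists_norming X σ n
      calc X.N (trunc σ n) = ∑ k ∈ Finset.range n, τ k * σ k := h3.symm
        _ ≤ |∑ k ∈ Finset.range n, τ k * σ k| := le_abs_self _
        _ ≤ dualN (dualMem X.Mem X.N) (dualN X.Mem X.N) σ :=
            le_csSup ⟨X.N σ, hub⟩ ⟨τ, n, h1, h2, rfl⟩

end
end

section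
/- Let 1 ≤ p < ∞, Y a maximal sequence space, and X = DL(Y, ℓ_p) the space of diagonal operators from Y to ℓ_p with operator norm, i.e. ‖σ‖_X = sup_{τ ∈ B_Y} (Σ_k |σ_k τ_k|^p)^{1/p}. Then X is p-convex with constant 1: for all finite families (x_j)_{j=1}^n in X, ‖(Σ_{j=1}^n |x_j|^p)^{1/p}‖_X ≤ (Σ_{j=1}^n ‖x_j‖_X^p)^{1/p}. -/
noncomputable section

/-- The norm of the space `DL(Y, ℓ_p)` of diagonal operators from `Y` to `ℓ_p`:
`‖σ‖ = sup_{τ ∈ B_Y} (∑_k |σ_k τ_k|^p)^{1/p}` (via partial sums). -/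
def DLpN (Y : MaxSeqSpace) (p : ℝ) (σ : ℕ → ℝ) : ℝ :=
  sSup {r : ℝ | ∃ (τ : ℕ → ℝ) (m : ℕ), Y.Mem τ ∧ Y.N τ ≤ 1 ∧
    r = (∑ k ∈ Finset.range m, |σ k * τ k| ^ p) ^ (1/p)}

/-- `X = DL(Y, ℓ_p)` is `p`-convex with constant `1`:
`‖(∑_j |x_j|^p)^{1/p}‖_X ≤ (∑_j ‖x_j‖_X^p)^{1/p}`. -/
theorem stmt6 (p : ℝ) (hp : 1 ≤ p) (Y : MaxSeqSpace) (n : ℕ) (x : Fin n → ℕ → ℝ)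
    (hbdd : ∀ j : Fin n, BddAbove {r : ℝ | ∃ (τ : ℕ → ℝ) (m : ℕ),
      Y.Mem τ ∧ Y.N τ ≤ 1 ∧ r = (∑ k ∈ Finset.range m, |x j k * τ k| ^ p) ^ (1/p)}) :
    DLpN Y p (fun k => (∑ j, |x j k| ^ p) ^ (1/p)) ≤ (∑ j, DLpN Y p (x j) ^ p) ^ (1/p) := by
  have hp0 : (0:ℝ) < p := lt_of_lt_of_le one_pos hp
  have hpne : p ≠ 0 := ne_of_gt hp0
  have h1p : (0:ℝ) ≤ 1/p := by positivity
  -- zero is in every defining set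
  have hmem0 : Y.Mem 0 := Y.l1_subset 0 (by simpa using summable_zero)
  have hN0 : Y.N 0 ≤ 1 := by
    have := Y.n_smul 0 0
    simp at this
    rw [show (0 : ℕ → ℝ) = (0:ℝ) • (0 : ℕ → ℝ) by simp, Y.n_smul]
    simp
  have hzero_mem : ∀ j : Fin n, (0:ℝ) ∈ {r : ℝ | ∃ (τ : ℕ → ℝ) (m : ℕ),
      Y.Mem τ ∧ Y.N τ ≤ 1 ∧ r = (∑ k ∈ Finset.range m, |x j k * τ k| ^ p) ^ (1/p)} := by
    intro j
    exact ⟨0, 0, hmem0, hN0, by rw [Finset.range_zero, Finset.sum_empty, Real.zero_rpow (one_div_ne_zero hpne)]⟩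
  have hDL_nonneg : ∀ j : Fin n, 0 ≤ DLpN Y p (x j) := fun j =>
    le_csSup (hbdd j) (hzero_mem j)
  have hRHSsum : (0:ℝ) ≤ ∑ j, DLpN Y p (x j) ^ p :=
    Finset.sum_nonneg fun j _ => Real.rpow_nonneg (hDL_nonneg j) p
  apply Real.sSup_le
  · rintro r ⟨τ, m, hτ, hτ1, rfl⟩
    have key : ∀ k, |(∑ j, |x j k| ^ p) ^ (1/p) * τ k| ^ p = ∑ j, |x j k * τ k| ^ p := by
      intro k
      have hs : (0:ℝ) ≤ ∑ j, |x j k| ^ p :=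
        Finset.sum_nonneg fun j _ => Real.rpow_nonneg (abs_nonneg _) p
      rw [abs_mul, abs_of_nonneg (Real.rpow_nonneg hs _),
        Real.mul_rpow (Real.rpow_nonneg hs _) (abs_nonneg _),
        one_div, Real.rpow_inv_rpow hs hpne, Finset.sum_mul]
      refine Finset.sum_congr rfl fun j _ => ?_
      rw [abs_mul, Real.mul_rpow (abs_nonneg _) (abs_nonneg _)]
    calc (∑ k ∈ Finset.range m, |(∑ j, |x j k| ^ p) ^ (1/p) * τ k| ^ p) ^ (1/p)
        = (∑ j, ∑ k ∈ Finset.range m, |x j k * τ k| ^ p) ^ (1/p) := by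
          rw [Finset.sum_comm]
          congr 1
          exact Finset.sum_congr rfl fun k _ => key k
      _ ≤ (∑ j, DLpN Y p (x j) ^ p) ^ (1/p) := by
          apply Real.rpow_le_rpow
            (Finset.sum_nonneg fun j _ => Finset.sum_nonneg fun k _ =>
              Real.rpow_nonneg (abs_nonneg _) p) _ h1p
          refine Finset.sum_le_sum fun j _ => ?_
          have hsj : (0:ℝ) ≤ ∑ k ∈ Finset.range m, |x j k * τ k| ^ p :=
            Finset.sum_nonneg fun k _ => Real.rpow_nonneg (abs_nonneg _) p
          have hel : (∑ k ∈ Finset.range m, |x j k * τ k| ^ p) ^ (1/p) ≤ DLpN Y p (x j) :=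
            le_csSup (hbdd j) ⟨τ, m, hτ, hτ1, rfl⟩
          calc ∑ k ∈ Finset.range m, |x j k * τ k| ^ p
              = ((∑ k ∈ Finset.range m, |x j k * τ k| ^ p) ^ (1/p)) ^ p := by
                rw [one_div, Real.rpow_inv_rpow hsj hpne]
            _ ≤ DLpN Y p (x j) ^ p :=
                Real.rpow_le_rpow (Real.rpow_nonneg hsj _) hel (le_of_lt hp0)
  · exact Real.rpow_nonneg hRHSsum _

end
end

section
/- Let X be a maximal symmetric sequence space, T : E → F a bounded operator between Banach spaces, and n ∈ ℕ. Then π^n_{X,1}(T) ≤ rc^n_X(T) ≤ √2 · π^n_{X,2}(T). -/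
noncomputable section

variable {E F : Type*} [NormedAddCommGroup E] [NormedSpace ℝ E]
  [NormedAddCommGroup F] [NormedSpace ℝ F]

/-- `π^n_{X,q}(T)`: the `(X,q)`-summing norm of `T` restricted to `n` vectors. -/
def piXq (X : MaxSeqSpace) (q : ℝ) (T : E →L[ℝ] F) (n : ℕ) : ℝ :=
  sSup {r : ℝ | ∃ x : Fin n → E,
    (∀ a : E →L[ℝ] ℝ, ‖a‖ ≤ 1 → (∑ k, |a (x k)| ^ q) ^ (1/q) ≤ 1) ∧
    r = X.N (seqOf n fun k => ‖T (x k)‖)}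

/-- `rc^n_X(T)`: the Rademacher cotype `X` constant of `T` restricted to `n`
vectors; the `L²` Rademacher average is written as an average over all sign
choices. -/
def rcX (X : MaxSeqSpace) (T : E →L[ℝ] F) (n : ℕ) : ℝ :=
  sSup {r : ℝ | ∃ x : Fin n → E,
    Real.sqrt ((∑ θ : Fin n → Bool,
        ‖∑ k, (if θ k then (1 : ℝ) else -1) • x k‖ ^ 2) / 2 ^ n) ≤ 1 ∧
    r = X.N (seqOf n fun k => ‖T (x k)‖)}


section AuxLemmas
open Finset

/-- Sign attached to a Boolean. -/
def sgn (b : Bool) : ℝ := if b then 1 else -1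

lemma sgn_mul_self (b : Bool) : sgn b * sgn b = 1 := by cases b <;> norm_num [sgn]

lemma sgn_not (b : Bool) : sgn (!b) = - sgn b := by cases b <;> norm_num [sgn]

lemma abs_sgn (b : Bool) : |sgn b| = 1 := by cases b <;> norm_num [sgn]

lemma rad_orth {n : ℕ} (j k : Fin n) (h : j ≠ k) :
    ∑ θ : Fin n → Bool, sgn (θ j) * sgn (θ k) = 0 := by
  classical
  refine Finset.sum_involution (fun θ _ => Function.update θ j (!θ j)) ?_ ?_
    (fun θ _ => Finset.mem_univ _) ?_
  · intro θ _
    simp only [Function.update_self, Function.update_of_ne (Ne.symm h), sgn_not]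
    ring
  · intro θ _ _
    intro hc
    have := congrFun hc j
    simp only [Function.update_self] at this
    exact Bool.not_ne_self _ this
  · intro θ _
    funext i
    by_cases hi : i = j
    · subst hi
      simp [Function.update_self]
    · simp [Function.update_of_ne hi]

lemma rad_sum_sq (n : ℕ) (c : Fin n → ℝ) :
    ∑ θ : Fin n → Bool, (∑ k, sgn (θ k) * c k) ^ 2 = 2 ^ n * ∑ k, c k ^ 2 := by
  classical
  have expand : ∀ θ : Fin n → Bool, (∑ k, sgn (θ k) * c k) ^ 2
      = ∑ j, ∑ k, (sgn (θ j) * sgn (θ k)) * (c j * c k) := by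
    intro θ
    rw [sq, Finset.sum_mul_sum]
    exact Finset.sum_congr rfl fun j _ => Finset.sum_congr rfl fun k _ => by ring
  simp_rw [expand]
  rw [Finset.sum_comm]
  have key : ∀ j : Fin n, ∑ θ : Fin n → Bool, ∑ k, (sgn (θ j) * sgn (θ k)) * (c j * c k)
      = 2 ^ n * c j ^ 2 := by
    intro j
    rw [Finset.sum_comm]
    have inner : ∀ k : Fin n, ∑ θ : Fin n → Bool, (sgn (θ j) * sgn (θ k)) * (c j * c k)
        = if j = k then 2 ^ n * c j ^ 2 else 0 := by
      intro k
      rw [← Finset.sum_mul]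
      by_cases h : j = k
      · subst h
        rw [if_pos rfl]
        have : ∑ θ : Fin n → Bool, sgn (θ j) * sgn (θ j) = 2 ^ n := by
          rw [Finset.sum_congr rfl fun θ _ => sgn_mul_self (θ j)]
          simp [Finset.card_univ]
        rw [this]; ring
      · rw [if_neg h, rad_orth j k h, zero_mul]
    rw [Finset.sum_congr rfl fun k _ => inner k, Finset.sum_ite_eq Finset.univ j _]
    simp
  rw [Finset.sum_congr rfl fun j _ => key j, ← Finset.mul_sum]

lemma mem_zero' (X : MaxSeqSpace) : X.Mem 0 := X.l1_subset 0 (by simp [summable_zero])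

lemma N_zero' (X : MaxSeqSpace) : X.N 0 = 0 := by
  have h := X.n_smul 0 0
  simpa using h

lemma N_sum_le' (X : MaxSeqSpace) {α : Type*} (s : Finset α) (f : α → ℕ → ℝ)
    (hf : ∀ a, X.Mem (f a)) :
    X.Mem (∑ a ∈ s, f a) ∧ X.N (∑ a ∈ s, f a) ≤ ∑ a ∈ s, X.N (f a) := by
  classical
  induction s using Finset.induction with
  | empty => simpa using ⟨mem_zero' X, le_of_eq (N_zero' X)⟩
  | insert _ _ h ih =>
    rw [Finset.sum_insert h, Finset.sum_insert h]
    exact ⟨X.mem_add (hf _) ih.1,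
      (X.n_add (hf _) ih.1).trans (add_le_add_right ih.2 _)⟩

lemma mem_single' (X : MaxSeqSpace) (k : ℕ) (c : ℝ) :
    X.Mem (c • (Pi.single k 1 : ℕ → ℝ)) := by
  apply X.l1_subset
  apply summable_of_ne_finset_zero (s := {k})
  intro i hi
  simp only [Finset.mem_singleton] at hi
  simp [Pi.single_apply, hi]

lemma seqOf_eq_sum (n : ℕ) (v : Fin n → ℝ) :
    seqOf n v = ∑ k : Fin n, (v k) • (Pi.single (k : ℕ) 1 : ℕ → ℝ) := by
  funext i
  simp only [seqOf, Finset.sum_apply, Pi.smul_apply, Pi.single_apply, smul_eq_mul,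
    mul_ite, mul_one, mul_zero]
  by_cases h : i < n
  · rw [dif_pos h]
    rw [Finset.sum_eq_single (⟨i, h⟩ : Fin n)]
    · simp
    · intro k _ hk
      rw [if_neg]
      intro hik
      exact hk (by exact Fin.ext hik.symm)
    · intro hk
      exact absurd (Finset.mem_univ _) hk
  · rw [dif_neg h]
    symm
    apply Finset.sum_eq_zero
    intro k _
    rw [if_neg]
    omega

lemma N_seqOf_le (X : MaxSeqSpace) (n : ℕ) (v : Fin n → ℝ) :
    X.N (seqOf n v) ≤ ∑ k, |v k| := by
  rw [seqOf_eq_sum]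
  refine le_trans (N_sum_le' X Finset.univ _ (fun k => mem_single' X _ _)).2 ?_
  apply Finset.sum_le_sum
  intro k _
  rw [X.n_smul, X.n_single, mul_one]

lemma N_seqOf_zero (X : MaxSeqSpace) (n : ℕ) :
    X.N (seqOf n fun _ => (0:ℝ)) = 0 := by
  have : (seqOf n fun _ => (0:ℝ)) = 0 := by
    funext i
    simp [seqOf]
  rw [this, N_zero']

lemma norm_le_one_of_dual {E : Type*} [NormedAddCommGroup E] [NormedSpace ℝ E] (y : E)
    (h : ∀ a : E →L[ℝ] ℝ, ‖a‖ ≤ 1 → |a y| ≤ 1) : ‖y‖ ≤ 1 := by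
  apply NormedSpace.norm_le_dual_bound ℝ y zero_le_one
  intro f
  rcases eq_or_ne f 0 with rfl | hf
  · simp
  · have hfn : 0 < ‖f‖ := norm_pos_iff.mpr hf
    have h1 : ‖(‖f‖⁻¹ • f)‖ ≤ 1 := by
      rw [norm_smul, norm_inv, norm_norm]
      rw [inv_mul_cancel₀ hfn.ne']
    have h2 := h (‖f‖⁻¹ • f) h1
    simp only [ContinuousLinearMap.smul_apply, smul_eq_mul, abs_mul, abs_inv, abs_norm] at h2
    rw [Real.norm_eq_abs, one_mul]
    calc |f y| = ‖f‖ * (‖f‖⁻¹ * |f y|) := by field_simp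
    _ ≤ ‖f‖ * 1 := mul_le_mul_of_nonneg_left h2 hfn.le
    _ = ‖f‖ := mul_one _

end AuxLemmas

section MainAux
open Finset

variable {E F : Type*} [NormedAddCommGroup E] [NormedSpace ℝ E]
  [NormedAddCommGroup F] [NormedSpace ℝ F]

/-- The Rademacher average constraint implies the sum of squared norms is
bounded by `2 ^ n`. -/
lemma rc_sum_le {n : ℕ} {x : Fin n → E}
    (hx : Real.sqrt ((∑ θ : Fin n → Bool,
        ‖∑ k, (if θ k then (1 : ℝ) else -1) • x k‖ ^ 2) / 2 ^ n) ≤ 1) :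
    (∑ θ : Fin n → Bool, ‖∑ k, (if θ k then (1 : ℝ) else -1) • x k‖ ^ 2) ≤ 2 ^ n := by
  set S := ∑ θ : Fin n → Bool, ‖∑ k, (if θ k then (1 : ℝ) else -1) • x k‖ ^ 2 with hSdef
  have h2n : (0:ℝ) < 2 ^ n := by positivity
  have hS0 : 0 ≤ S := Finset.sum_nonneg fun _ _ => sq_nonneg _
  have hsq := Real.sq_sqrt (div_nonneg hS0 h2n.le)
  have h1 : S / 2 ^ n ≤ 1 := by
    nlinarith [Real.sqrt_nonneg (S / 2 ^ n)]
  calc S = (S / 2 ^ n) * 2 ^ n := by field_simp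
  _ ≤ 1 * 2 ^ n := by exact mul_le_mul_of_nonneg_right h1 h2n.le
  _ = 2 ^ n := one_mul _

/-- Under the Rademacher constraint, each individual vector has norm at most
`Real.sqrt (2 ^ n)`. -/
lemma rc_norm_le {n : ℕ} {x : Fin n → E}
    (hx : Real.sqrt ((∑ θ : Fin n → Bool,
        ‖∑ k, (if θ k then (1 : ℝ) else -1) • x k‖ ^ 2) / 2 ^ n) ≤ 1)
    (k : Fin n) : ‖x k‖ ≤ Real.sqrt (2 ^ n) := by
  classical
  have hS := rc_sum_le hx
  set y : (Fin n → Bool) → E := fun θ => ∑ j, (if θ j then (1 : ℝ) else -1) • x j with hy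
  have hyθ : ∀ θ : Fin n → Bool, ‖y θ‖ ≤ Real.sqrt (2 ^ n) := by
    intro θ
    have h1 : ‖y θ‖ ^ 2 ≤ 2 ^ n := by
      refine le_trans ?_ hS
      exact Finset.single_le_sum (f := fun θ => ‖y θ‖ ^ 2)
        (fun _ _ => sq_nonneg _) (Finset.mem_univ θ)
    calc ‖y θ‖ = Real.sqrt (‖y θ‖ ^ 2) := (Real.sqrt_sq (norm_nonneg _)).symm
    _ ≤ Real.sqrt (2 ^ n) := Real.sqrt_le_sqrt h1
  set θT : Fin n → Bool := fun _ => true with hθT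
  set θk : Fin n → Bool := Function.update θT k false with hθk
  have hdiff : y θT - y θk = (2:ℝ) • x k := by
    rw [hy]
    simp only
    rw [← Finset.sum_sub_distrib]
    rw [Finset.sum_eq_single k]
    · have h1 : θT k = true := rfl
      have h2 : θk k = false := by simp [hθk, Function.update_self]
      simp [h2, sub_neg_eq_add, two_smul]
    · intro j _ hj
      have h1 : θT j = true := rfl
      have h2 : θk j = true := by simp [hθk, Function.update_of_ne hj, h1]
      simp [h1, h2]
    · intro hk
      exact absurd (Finset.mem_univ _) hk
  have h2 : (2:ℝ) * ‖x k‖ ≤ 2 * Real.sqrt (2 ^ n) := by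
    have : ‖(2:ℝ) • x k‖ ≤ ‖y θT‖ + ‖y θk‖ := by
      rw [← hdiff]; exact norm_sub_le _ _
    rw [norm_smul] at this
    simp only [Real.norm_ofNat] at this
    calc (2:ℝ) * ‖x k‖ ≤ ‖y θT‖ + ‖y θk‖ := this
    _ ≤ Real.sqrt (2 ^ n) + Real.sqrt (2 ^ n) := add_le_add (hyθ _) (hyθ _)
    _ = 2 * Real.sqrt (2 ^ n) := by ring
  linarith

end MainAux


section MainAux2
open Finset

variable {E F : Type*} [NormedAddCommGroup E] [NormedSpace ℝ E]
  [NormedAddCommGroup F] [NormedSpace ℝ F]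

lemma rc_bddAbove (X : MaxSeqSpace) (T : E →L[ℝ] F) (n : ℕ) :
    BddAbove {r : ℝ | ∃ x : Fin n → E,
      Real.sqrt ((∑ θ : Fin n → Bool,
          ‖∑ k, (if θ k then (1 : ℝ) else -1) • x k‖ ^ 2) / 2 ^ n) ≤ 1 ∧
      r = X.N (seqOf n fun k => ‖T (x k)‖)} := by
  refine ⟨n * (‖T‖ * Real.sqrt (2 ^ n)), ?_⟩
  rintro r ⟨x, hx, rfl⟩
  refine le_trans (N_seqOf_le X n _) ?_
  have hk : ∀ k : Fin n, |‖T (x k)‖| ≤ ‖T‖ * Real.sqrt (2 ^ n) := by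
    intro k
    rw [abs_norm]
    refine le_trans (T.le_opNorm _) ?_
    exact mul_le_mul_of_nonneg_left (rc_norm_le hx k) (norm_nonneg T)
  refine le_trans (Finset.sum_le_sum fun k _ => hk k) ?_
  rw [Finset.sum_const, Finset.card_univ, Fintype.card_fin, nsmul_eq_mul]

lemma rc_zero_mem (X : MaxSeqSpace) (T : E →L[ℝ] F) (n : ℕ) :
    (0:ℝ) ∈ {r : ℝ | ∃ x : Fin n → E,
      Real.sqrt ((∑ θ : Fin n → Bool,
          ‖∑ k, (if θ k then (1 : ℝ) else -1) • x k‖ ^ 2) / 2 ^ n) ≤ 1 ∧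
      r = X.N (seqOf n fun k => ‖T (x k)‖)} := by
  refine ⟨0, by simp, ?_⟩
  rw [show (fun k : Fin n => ‖T ((0 : Fin n → E) k)‖) = fun _ => (0:ℝ) by
    funext k; simp, N_seqOf_zero]

lemma pi2_bddAbove (X : MaxSeqSpace) (T : E →L[ℝ] F) (n : ℕ) :
    BddAbove {r : ℝ | ∃ x : Fin n → E,
      (∀ a : E →L[ℝ] ℝ, ‖a‖ ≤ 1 → (∑ k, |a (x k)| ^ (2:ℝ)) ^ (1/(2:ℝ)) ≤ 1) ∧
      r = X.N (seqOf n fun k => ‖T (x k)‖)} := by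
  refine ⟨n * ‖T‖, ?_⟩
  rintro r ⟨x, hx, rfl⟩
  have hxk : ∀ k : Fin n, ‖x k‖ ≤ 1 := by
    intro k
    apply norm_le_one_of_dual
    intro a ha
    have h := hx a ha
    set s := ∑ k, |a (x k)| ^ (2:ℝ) with hs
    have hs0 : 0 ≤ s := Finset.sum_nonneg fun k _ => Real.rpow_nonneg (abs_nonneg _) _
    have hs1 : s ≤ 1 := by
      by_contra hc
      push_neg at hc
      have h2 : (1:ℝ) < s ^ (1/(2:ℝ)) :=
        (Real.one_lt_rpow_iff_of_pos (lt_trans zero_lt_one hc)).mpr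
          (Or.inl ⟨hc, by norm_num⟩)
      linarith
    have hterm : |a (x k)| ^ (2:ℝ) ≤ 1 := by
      refine le_trans ?_ hs1
      exact Finset.single_le_sum (f := fun k => |a (x k)| ^ (2:ℝ))
        (fun k _ => Real.rpow_nonneg (abs_nonneg _) _) (Finset.mem_univ k)
    rw [Real.rpow_two] at hterm
    nlinarith [abs_nonneg (a (x k))]
  refine le_trans (N_seqOf_le X n _) ?_
  have hk : ∀ k : Fin n, |‖T (x k)‖| ≤ ‖T‖ := by
    intro k
    rw [abs_norm]
    calc ‖T (x k)‖ ≤ ‖T‖ * ‖x k‖ := T.le_opNorm _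
    _ ≤ ‖T‖ * 1 := mul_le_mul_of_nonneg_left (hxk k) (norm_nonneg T)
    _ = ‖T‖ := mul_one _
  refine le_trans (Finset.sum_le_sum fun k _ => hk k) ?_
  rw [Finset.sum_const, Finset.card_univ, Fintype.card_fin, nsmul_eq_mul]

lemma pi2_zero_mem (X : MaxSeqSpace) (T : E →L[ℝ] F) (n : ℕ) :
    (0:ℝ) ∈ {r : ℝ | ∃ x : Fin n → E,
      (∀ a : E →L[ℝ] ℝ, ‖a‖ ≤ 1 → (∑ k, |a (x k)| ^ (2:ℝ)) ^ (1/(2:ℝ)) ≤ 1) ∧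
      r = X.N (seqOf n fun k => ‖T (x k)‖)} := by
  refine ⟨0, ?_, ?_⟩
  · intro a _
    have : (∑ k : Fin n, |a ((0 : Fin n → E) k)| ^ (2:ℝ)) = 0 := by
      apply Finset.sum_eq_zero
      intro k _
      simp [Real.rpow_two]
    rw [this, Real.zero_rpow (by norm_num)]
    exact zero_le_one
  · rw [show (fun k : Fin n => ‖T ((0 : Fin n → E) k)‖) = fun _ => (0:ℝ) by
      funext k; simp, N_seqOf_zero]

lemma part_one (X : MaxSeqSpace) (T : E →L[ℝ] F) (n : ℕ) :
    piXq X 1 T n ≤ rcX X T n := by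
  classical
  unfold piXq rcX
  apply Real.sSup_le
  · rintro r ⟨x, hx, rfl⟩
    apply le_csSup (rc_bddAbove X T n)
    refine ⟨x, ?_, rfl⟩
    have habs : ∀ a : E →L[ℝ] ℝ, ‖a‖ ≤ 1 → ∑ k, |a (x k)| ≤ 1 := by
      intro a ha
      have h := hx a ha
      norm_num [Real.rpow_one] at h
      exact h
    have hnorm : ∀ θ : Fin n → Bool,
        ‖∑ k, (if θ k then (1:ℝ) else -1) • x k‖ ≤ 1 := by
      intro θ
      apply norm_le_one_of_dual
      intro a ha
      rw [map_sum]
      refine le_trans (Finset.abs_sum_le_sum_abs _ _) ?_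
      refine le_trans (Finset.sum_le_sum ?_) (habs a ha)
      intro k _
      rw [map_smul, smul_eq_mul, abs_mul]
      have h1 : |(if θ k then (1:ℝ) else -1)| = 1 := by cases θ k <;> norm_num
      rw [h1, one_mul]
    have hsum : (∑ θ : Fin n → Bool,
        ‖∑ k, (if θ k then (1:ℝ) else -1) • x k‖ ^ 2) ≤ 2 ^ n := by
      calc (∑ θ : Fin n → Bool,
          ‖∑ k, (if θ k then (1:ℝ) else -1) • x k‖ ^ 2)
          ≤ ∑ _θ : Fin n → Bool, (1:ℝ) :=
            Finset.sum_le_sum fun θ _ => pow_le_one₀ (norm_nonneg _) (hnorm θ)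
      _ = 2 ^ n := by
        rw [Finset.sum_const, Finset.card_univ, nsmul_eq_mul, mul_one]
        rw [Fintype.card_fun, Fintype.card_bool, Fintype.card_fin]
        push_cast
        ring
    have h2n : (0:ℝ) < 2 ^ n := by positivity
    calc Real.sqrt ((∑ θ : Fin n → Bool,
          ‖∑ k, (if θ k then (1:ℝ) else -1) • x k‖ ^ 2) / 2 ^ n)
        ≤ Real.sqrt 1 := Real.sqrt_le_sqrt ((div_le_one h2n).mpr hsum)
    _ = 1 := Real.sqrt_one
  · exact le_csSup (rc_bddAbove X T n) (rc_zero_mem X T n)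

lemma part_two (X : MaxSeqSpace) (T : E →L[ℝ] F) (n : ℕ) :
    rcX X T n ≤ Real.sqrt 2 * piXq X 2 T n := by
  classical
  unfold piXq rcX
  have h0 : (0:ℝ) ≤ sSup {r : ℝ | ∃ x : Fin n → E,
      (∀ a : E →L[ℝ] ℝ, ‖a‖ ≤ 1 → (∑ k, |a (x k)| ^ (2:ℝ)) ^ (1/(2:ℝ)) ≤ 1) ∧
      r = X.N (seqOf n fun k => ‖T (x k)‖)} :=
    le_csSup (pi2_bddAbove X T n) (pi2_zero_mem X T n)
  apply Real.sSup_le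
  · rintro r ⟨x, hx, rfl⟩
    have hS := rc_sum_le hx
    have hmem : X.N (seqOf n fun k => ‖T (x k)‖) ∈ {r : ℝ | ∃ x : Fin n → E,
        (∀ a : E →L[ℝ] ℝ, ‖a‖ ≤ 1 → (∑ k, |a (x k)| ^ (2:ℝ)) ^ (1/(2:ℝ)) ≤ 1) ∧
        r = X.N (seqOf n fun k => ‖T (x k)‖)} := by
      refine ⟨x, ?_, rfl⟩
      intro a ha
      have key : ∑ k, (a (x k)) ^ 2 ≤ 1 := by
        have horth := rad_sum_sq n (fun k => a (x k))
        have hptwise : ∀ θ : Fin n → Bool, (∑ k, sgn (θ k) * a (x k)) ^ 2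
            ≤ ‖∑ k, (if θ k then (1:ℝ) else -1) • x k‖ ^ 2 := by
          intro θ
          set y := ∑ k, (if θ k then (1:ℝ) else -1) • x k with hy
          have heq : ∑ k, sgn (θ k) * a (x k) = a y := by
            rw [hy, map_sum]
            refine Finset.sum_congr rfl fun k _ => ?_
            rw [map_smul, smul_eq_mul]
            rfl
          rw [heq]
          have h1 : |a y| ≤ ‖y‖ := by
            calc |a y| = ‖a y‖ := (Real.norm_eq_abs _).symm
            _ ≤ ‖a‖ * ‖y‖ := a.le_opNorm y
            _ ≤ 1 * ‖y‖ := mul_le_mul_of_nonneg_right ha (norm_nonneg _)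
            _ = ‖y‖ := one_mul _
          nlinarith [abs_nonneg (a y), sq_abs (a y)]
        have hbig : 2 ^ n * ∑ k, (a (x k)) ^ 2 ≤ 2 ^ n := by
          rw [← horth]
          exact le_trans (Finset.sum_le_sum fun θ _ => hptwise θ) hS
        have h2n : (0:ℝ) < 2 ^ n := by positivity
        nlinarith
      have hterm : ∀ k : Fin n, |a (x k)| ^ (2:ℝ) = (a (x k)) ^ 2 := by
        intro k
        rw [Real.rpow_two, sq_abs]
      rw [Finset.sum_congr rfl fun k _ => hterm k]
      exact Real.rpow_le_one (Finset.sum_nonneg fun k _ => sq_nonneg _) key (by norm_num)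
    calc X.N (seqOf n fun k => ‖T (x k)‖) ≤ _ := le_csSup (pi2_bddAbove X T n) hmem
    _ ≤ Real.sqrt 2 * _ := le_mul_of_one_le_left h0 (Real.one_le_sqrt.mpr one_le_two)
  · exact mul_nonneg (Real.sqrt_nonneg 2) h0

end MainAux2

/-- `π^n_{X,1}(T) ≤ rc^n_X(T) ≤ √2 · π^n_{X,2}(T)`. -/
theorem stmt11 (X : MaxSymSeqSpace) (E F : Type*)
    [NormedAddCommGroup E] [NormedSpace ℝ E] [CompleteSpace E]
    [NormedAddCommGroup F] [NormedSpace ℝ F] [CompleteSpace F]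
    (T : E →L[ℝ] F) (n : ℕ) :
    piXq X.toMaxSeqSpace 1 T n ≤ rcX X.toMaxSeqSpace T n ∧
    rcX X.toMaxSeqSpace T n ≤ Real.sqrt 2 * piXq X.toMaxSeqSpace 2 T n := by
  exact ⟨part_one X.toMaxSeqSpace T n, part_two X.toMaxSeqSpace T n⟩

end
end

section
/- Let X, Y, Z be maximal symmetric sequence spaces with X = DL(Y, Z) (diagonal operators from Y to Z with operator norm). Then for any bounded operator T : E → F between Banach spaces and any n, π^n_{X,1}(T) ≥ sup{π^n_{Z,1}(T ∘ R ∘ D_σ) : R : ℓ∞ → E with ‖R‖ ≤ 1, σ ∈ B_Y}, where D_σ is the diagonal operator with entries σ. -/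
noncomputable section

namespace MaxSeqSpace

variable (W : MaxSeqSpace)

lemma mem_of_eventually_zero {f : ℕ → ℝ} (n : ℕ) (h : ∀ k, n ≤ k → f k = 0) : W.Mem f := by
  apply W.l1_subset
  apply summable_of_ne_finset_zero (s := Finset.range n)
  intro k hk
  simp only [Finset.mem_range, not_lt] at hk
  simp [h k hk]

lemma n_zero : W.N 0 = 0 := by
  have := W.n_smul 0 0
  simpa using this

lemma mem_seqOf (n : ℕ) (v : Fin n → ℝ) : W.Mem (seqOf n v) := by
  apply W.mem_of_eventually_zero n
  intro k hk
  simp [seqOf, Nat.not_lt.mpr hk]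

lemma n_single_smul (k : ℕ) (c : ℝ) : W.N (c • (Pi.single k 1 : ℕ → ℝ)) = |c| := by
  rw [W.n_smul, W.n_single, mul_one]

lemma mem_finset_sum {ι : Type*} (s : Finset ι) (f : ι → (ℕ → ℝ)) (hf : ∀ i ∈ s, W.Mem (f i)) :
    W.Mem (∑ i ∈ s, f i) := by
  classical
  induction s using Finset.induction with
  | empty => simpa using W.mem_of_eventually_zero 0 (by simp)
  | insert _ _ hx ih =>
    rw [Finset.sum_insert hx]
    exact W.mem_add (hf _ (Finset.mem_insert_self _ _))
      (ih fun i hi => hf i (Finset.mem_insert_of_mem hi))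

lemma n_finset_sum_le {ι : Type*} (s : Finset ι) (f : ι → (ℕ → ℝ)) (hf : ∀ i ∈ s, W.Mem (f i)) :
    W.N (∑ i ∈ s, f i) ≤ ∑ i ∈ s, W.N (f i) := by
  classical
  induction s using Finset.induction with
  | empty => simp [W.n_zero]
  | insert _ _ hx ih =>
    rename_i a s
    rw [Finset.sum_insert hx, Finset.sum_insert hx]
    calc W.N (f a + ∑ i ∈ s, f i) ≤ W.N (f a) + W.N (∑ i ∈ s, f i) :=
          W.n_add (hf _ (Finset.mem_insert_self _ _))
            (W.mem_finset_sum s f fun i hi => hf i (Finset.mem_insert_of_mem hi))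
      _ ≤ _ := by
          gcongr
          exact ih fun i hi => hf i (Finset.mem_insert_of_mem hi)

/-- a finitely supported sequence is a finite sum of singles -/
lemma eq_sum_single {f : ℕ → ℝ} (n : ℕ) (h : ∀ k, n ≤ k → f k = 0) :
    f = ∑ k ∈ Finset.range n, f k • (Pi.single k 1 : ℕ → ℝ) := by
  funext j
  rw [Finset.sum_apply]
  by_cases hj : j < n
  · rw [Finset.sum_eq_single j]
    · simp
    · intro b _ hbj
      simp [Pi.single_apply, Ne.symm hbj]
    · intro hj'
      exact absurd (Finset.mem_range.mpr hj) (fun c => hj' c)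
  · rw [h j (Nat.not_lt.mp hj)]
    symm
    apply Finset.sum_eq_zero
    intro b hb
    have : b ≠ j := by
      intro hbj; exact hj (hbj ▸ Finset.mem_range.mp hb)
    simp [Pi.single_apply, Ne.symm this]

lemma n_le_sum_abs {f : ℕ → ℝ} (n : ℕ) (h : ∀ k, n ≤ k → f k = 0) :
    W.N f ≤ ∑ k ∈ Finset.range n, |f k| := by
  calc W.N f = W.N (∑ k ∈ Finset.range n, f k • (Pi.single k 1 : ℕ → ℝ)) := by
        rw [← eq_sum_single n h]
    _
      ≤ ∑ k ∈ Finset.range n, W.N (f k • (Pi.single k 1 : ℕ → ℝ)) := by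
        apply W.n_finset_sum_le
        intro i _
        apply W.mem_of_eventually_zero (i+1)
        intro k hk
        have : i ≠ k := by omega
        simp [Pi.single_apply, this.symm]
    _ = ∑ k ∈ Finset.range n, |f k| := by
        apply Finset.sum_congr rfl
        intro i _
        rw [W.n_single_smul]

lemma mono {f g : ℕ → ℝ} (hg : W.Mem g) (h : ∀ k, |f k| ≤ |g k|) :
    W.Mem f ∧ W.N f ≤ W.N g := by
  classical
  set α : ℕ → ℝ := fun k => if g k = 0 then 0 else f k / g k with hα
  have hα1 : ∀ k, |α k| ≤ 1 := by
    intro k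
    by_cases hgk : g k = 0
    · simp [hα, hgk]
    · simp only [hα, hgk, if_false]
      rw [abs_div, div_le_one (abs_pos.mpr hgk)]
      exact h k
  have hfg : α * g = f := by
    funext k
    by_cases hgk : g k = 0
    · have : |f k| ≤ 0 := by simpa [hgk] using h k
      have : f k = 0 := abs_nonpos_iff.mp this
      simp [hα, hgk, this]
    · simp only [Pi.mul_apply, hα, hgk, if_false]
      exact div_mul_cancel₀ _ hgk
  have := W.solid α g hg hα1
  rw [hfg] at this
  exact this

lemma coord_le {f : ℕ → ℝ} (hf : W.Mem f) (k : ℕ) : |f k| ≤ W.N f := by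
  have h := W.solid (fun i => if i = k then 1 else 0) f hf (by intro i; show |(if i = k then (1:ℝ) else 0)| ≤ 1; split <;> simp)
  have he : (fun i => if i = k then (1:ℝ) else 0) * f = f k • (Pi.single k 1 : ℕ → ℝ) := by
    funext j
    by_cases hj : j = k
    · subst hj; simp
    · simp [Pi.single_apply, hj]
  rw [he, W.n_single_smul] at h
  exact h.2

end MaxSeqSpace

/-- extension of an injection on a finite set to a permutation of ℕ -/
lemma exists_perm_extend {P : Set ℕ} (hP : P.Finite) (f : ℕ → ℕ) (hf : Set.InjOn f P) :
    ∃ π : Equiv.Perm ℕ, ∀ k ∈ P, π k = f k := by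
  classical
  have himg : (f '' P).Finite := hP.image f
  have h1 : (Pᶜ : Set ℕ).Infinite := hP.infinite_compl
  have h2 : ((f '' P)ᶜ : Set ℕ).Infinite := himg.infinite_compl
  have i1 : Infinite (Pᶜ : Set ℕ) := h1.to_subtype
  have i2 : Infinite ((f '' P)ᶜ : Set ℕ) := h2.to_subtype
  obtain ⟨d1⟩ := nonempty_denumerable (Pᶜ : Set ℕ)
  obtain ⟨d2⟩ := nonempty_denumerable ((f '' P)ᶜ : Set ℕ)
  let e : P ≃ (f '' P) := Equiv.Set.imageOfInjOn f P hf
  let ec : (Pᶜ : Set ℕ) ≃ ((f '' P)ᶜ : Set ℕ) :=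
    (@Denumerable.eqv _ d1).trans (@Denumerable.eqv _ d2).symm
  let π : Equiv.Perm ℕ :=
    (Equiv.Set.sumCompl P).symm.trans ((e.sumCongr ec).trans (Equiv.Set.sumCompl (f '' P)))
  refine ⟨π, ?_⟩
  intro k hk
  have : (Equiv.Set.sumCompl P).symm k = Sum.inl ⟨k, hk⟩ :=
    Equiv.Set.sumCompl_symm_apply_of_mem hk
  simp only [π, Equiv.trans_apply, this, Equiv.sumCongr_apply, Sum.map_inl,
    Equiv.Set.sumCompl_apply_inl]
  rfl


end


section Helpers2

open scoped ENNReal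

local notation "L∞" => lp (fun _ : ℕ => ℝ) ⊤

/-- coordinate evaluation as a continuous linear functional on ℓ∞ -/
noncomputable def evCLM (j : ℕ) : L∞ →L[ℝ] ℝ :=
  LinearMap.mkContinuous
    { toFun := fun f => f j
      map_add' := fun f g => by
        have := congrFun (lp.coeFn_add f g) j
        simpa using this
      map_smul' := fun c f => by
        have := congrFun (lp.coeFn_smul c f) j
        simpa using this }
    1 (fun f => by
      show ‖f j‖ ≤ 1 * ‖f‖
      rw [one_mul]
      exact lp.norm_apply_le_norm ENNReal.top_ne_zero f j)

lemma evCLM_norm_le (j : ℕ) : ‖evCLM j‖ ≤ 1 :=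
  LinearMap.mkContinuous_norm_le _ zero_le_one _

lemma evCLM_apply (j : ℕ) (f : L∞) : evCLM j f = f j := rfl

/-- weak-ℓ¹ admissibility from coordinatewise bounds -/
lemma adm_of_coord {n : ℕ} (u : Fin n → L∞) (h : ∀ j, ∑ k, |u k j| ≤ 1)
    (a : L∞ →L[ℝ] ℝ) (ha : ‖a‖ ≤ 1) : ∑ k, |a (u k)| ≤ 1 := by
  classical
  set ε : Fin n → ℝ := fun k => if a (u k) < 0 then -1 else 1 with hε
  have hnorm : ‖∑ k, ε k • u k‖ ≤ 1 := by
    apply lp.norm_le_of_forall_le zero_le_one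
    intro j
    have hco : (∑ k, ε k • u k) j = ∑ k, ε k * u k j := by
      have h1 := congrFun (lp.coeFn_sum (fun k => ε k • u k) Finset.univ) j
      rw [h1, Finset.sum_apply]
      apply Finset.sum_congr rfl
      intro k _
      have := congrFun (lp.coeFn_smul (ε k) (u k)) j
      simpa using this
    rw [Real.norm_eq_abs, hco]
    calc |∑ k, ε k * u k j| ≤ ∑ k, |ε k * u k j| := Finset.abs_sum_le_sum_abs _ _
      _ ≤ ∑ k, |u k j| := by
          apply Finset.sum_le_sum
          intro k _
          rw [abs_mul]
          have : |ε k| = 1 := by simp only [hε]; split <;> simp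
          simp [this]
      _ ≤ 1 := h j
  have hev : ∀ k, |a (u k)| = ε k * a (u k) := by
    intro k
    simp only [hε]
    split
    · rename_i hh; rw [abs_of_neg hh]; ring
    · rename_i hh; rw [abs_of_nonneg (not_lt.mp hh)]; ring
  calc ∑ k, |a (u k)| = ∑ k, a (ε k • u k) := by
        apply Finset.sum_congr rfl
        intro k _
        rw [hev k, map_smul]
        simp
    _ = a (∑ k, ε k • u k) := (map_sum a _ _).symm
    _ ≤ |a (∑ k, ε k • u k)| := le_abs_self _
    _ ≤ ‖a‖ * ‖∑ k, ε k • u k‖ := by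
        rw [← Real.norm_eq_abs]
        exact a.le_opNorm _
    _ ≤ 1 * 1 := by
        apply mul_le_mul ha hnorm (norm_nonneg _) zero_le_one
    _ = 1 := one_mul 1

/-- vectors in an admissible family have norm at most one -/
lemma norm_le_one_of_adm {E : Type*} [NormedAddCommGroup E] [NormedSpace ℝ E]
    {n : ℕ} (x : Fin n → E)
    (hadm : ∀ a : E →L[ℝ] ℝ, ‖a‖ ≤ 1 → ∑ k, |a (x k)| ≤ 1) (k : Fin n) : ‖x k‖ ≤ 1 := by
  apply NormedSpace.norm_le_dual_bound ℝ (x k) zero_le_one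
  intro f
  by_cases hf : f = 0
  · simp [hf]
  · have hfn : 0 < ‖f‖ := norm_pos_iff.mpr hf
    have h1 : ‖(‖f‖⁻¹ • f)‖ ≤ 1 := by
      rw [norm_smul, norm_inv, norm_norm]
      rw [inv_mul_cancel₀ (ne_of_gt hfn)]
    have h2 := hadm (‖f‖⁻¹ • f) h1
    have h3 : |(‖f‖⁻¹ • f) (x k)| ≤ 1 := by
      calc |(‖f‖⁻¹ • f) (x k)| ≤ ∑ i, |(‖f‖⁻¹ • f) (x i)| := by
            apply Finset.single_le_sum (f := fun i => |(‖f‖⁻¹ • f) (x i)|)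
            · intro i _; exact abs_nonneg _
            · exact Finset.mem_univ k
        _ ≤ 1 := h2
    have h4 : |(‖f‖⁻¹ • f) (x k)| = ‖f‖⁻¹ * ‖f (x k)‖ := by
      simp [Real.norm_eq_abs, abs_mul, abs_of_nonneg (le_of_lt (inv_pos.mpr hfn))]
    rw [h4] at h3
    calc ‖f (x k)‖ = ‖f‖ * (‖f‖⁻¹ * ‖f (x k)‖) := by
          field_simp
      _ ≤ ‖f‖ * 1 := by
          apply mul_le_mul_of_nonneg_left h3 (le_of_lt hfn)
      _ = 1 * ‖f‖ := by ring
  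
/-- counting integers in an interval -/
lemma count_bound (M : ℕ) (a m : ℝ) (ha : 0 ≤ a) (hm : 0 ≤ m) (ham : a + m ≤ 1) :
    |(((Finset.range M).filter
        (fun t : ℕ => (M:ℝ) * a ≤ (t:ℝ) ∧ (t:ℝ) < (M:ℝ) * (a + m))).card : ℝ) - M * m| ≤ 2 := by
  have hM0 : (0:ℝ) ≤ (M:ℝ) := Nat.cast_nonneg M
  have hfe : (Finset.range M).filter
        (fun t : ℕ => (M:ℝ) * a ≤ (t:ℝ) ∧ (t:ℝ) < (M:ℝ) * (a + m))
      = Finset.Ico ⌈(M:ℝ) * a⌉₊ ⌈(M:ℝ) * (a + m)⌉₊ := by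
    ext t
    simp only [Finset.mem_filter, Finset.mem_range, Finset.mem_Ico]
    constructor
    · rintro ⟨htM, h1, h2⟩
      exact ⟨Nat.ceil_le.mpr h1, Nat.lt_ceil.mpr h2⟩
    · rintro ⟨h1, h2⟩
      have hb : ⌈(M:ℝ) * (a + m)⌉₊ ≤ M := by
        apply Nat.ceil_le.mpr
        calc (M:ℝ) * (a+m) ≤ (M:ℝ) * 1 := by
              apply mul_le_mul_of_nonneg_left ham hM0
          _ = (M:ℝ) := mul_one _
      exact ⟨lt_of_lt_of_le h2 hb, Nat.ceil_le.mp h1, Nat.lt_ceil.mp h2⟩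
  rw [hfe, Nat.card_Ico]
  have hmono : ⌈(M:ℝ) * a⌉₊ ≤ ⌈(M:ℝ) * (a + m)⌉₊ := by
    apply Nat.ceil_le_ceil
    nlinarith
  rw [Nat.cast_sub hmono]
  have b1 : (M:ℝ) * a ≤ (⌈(M:ℝ) * a⌉₊ : ℝ) := Nat.le_ceil _
  have b2 : (⌈(M:ℝ) * a⌉₊ : ℝ) < (M:ℝ) * a + 1 := Nat.ceil_lt_add_one (by positivity)
  have b3 : (M:ℝ) * (a + m) ≤ (⌈(M:ℝ) * (a + m)⌉₊ : ℝ) := Nat.le_ceil _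
  have b4 : (⌈(M:ℝ) * (a + m)⌉₊ : ℝ) < (M:ℝ) * (a + m) + 1 := Nat.ceil_lt_add_one (by positivity)
  rw [abs_le]
  constructor <;> nlinarith

end Helpers2


noncomputable section

/-- `π^n_{W,1}(S)` for an operator `S : G → F`. -/
def piN1 (W : MaxSeqSpace) {G F : Type*} [NormedAddCommGroup G] [NormedSpace ℝ G]
    [NormedAddCommGroup F] [NormedSpace ℝ F] (S : G →L[ℝ] F) (n : ℕ) : ℝ :=
  sSup {r : ℝ | ∃ x : Fin n → G,
    (∀ a : G →L[ℝ] ℝ, ‖a‖ ≤ 1 → ∑ k, |a (x k)| ≤ 1) ∧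
    r = W.N (seqOf n fun k => ‖S (x k)‖)}

section Part3

open scoped ENNReal

variable {E F : Type*} [NormedAddCommGroup E] [NormedSpace ℝ E]
  [NormedAddCommGroup F] [NormedSpace ℝ F]

lemma piN1_bddAbove (W : MaxSeqSpace) (S : E →L[ℝ] F) (n : ℕ) :
    BddAbove {r : ℝ | ∃ x : Fin n → E,
      (∀ a : E →L[ℝ] ℝ, ‖a‖ ≤ 1 → ∑ k, |a (x k)| ≤ 1) ∧
      r = W.N (seqOf n fun k => ‖S (x k)‖)} := by
  refine ⟨n * ‖S‖, ?_⟩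
  rintro r ⟨x, hadm, rfl⟩
  have hvan : ∀ k, n ≤ k → seqOf n (fun k => ‖S (x k)‖) k = 0 := by
    intro k hk; simp [seqOf, Nat.not_lt.mpr hk]
  calc W.N (seqOf n fun k => ‖S (x k)‖)
      ≤ ∑ k ∈ Finset.range n, |seqOf n (fun k => ‖S (x k)‖) k| := W.n_le_sum_abs n hvan
    _ ≤ ∑ _k ∈ Finset.range n, ‖S‖ := by
        apply Finset.sum_le_sum
        intro i hi
        have hi' : i < n := Finset.mem_range.mp hi
        rw [abs_of_nonneg]
        · simp only [seqOf, dif_pos hi']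
          calc ‖S (x ⟨i, hi'⟩)‖ ≤ ‖S‖ * ‖x ⟨i, hi'⟩‖ := S.le_opNorm _
            _ ≤ ‖S‖ * 1 := by
                apply mul_le_mul_of_nonneg_left (norm_le_one_of_adm x hadm _) (norm_nonneg _)
            _ = ‖S‖ := mul_one _
        · simp only [seqOf]
          split <;> positivity
    _ = n * ‖S‖ := by
        rw [Finset.sum_const, Finset.card_range, nsmul_eq_mul]

lemma le_piN1 (W : MaxSeqSpace) (S : E →L[ℝ] F) (n : ℕ) (x : Fin n → E)
    (hadm : ∀ a : E →L[ℝ] ℝ, ‖a‖ ≤ 1 → ∑ k, |a (x k)| ≤ 1) :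
    W.N (seqOf n fun k => ‖S (x k)‖) ≤ piN1 W S n :=
  le_csSup (piN1_bddAbove W S n) ⟨x, hadm, rfl⟩

lemma seqOf_zero (W : MaxSeqSpace) (n : ℕ) : W.N (seqOf n fun _ => (0:ℝ)) = 0 := by
  have : (seqOf n fun _ => (0:ℝ)) = 0 := by
    funext i; simp [seqOf]
  rw [this, W.n_zero]

lemma piN1_nonneg (W : MaxSeqSpace) (S : E →L[ℝ] F) (n : ℕ) :
    0 ≤ piN1 W S n := by
  have h0 : (0:ℝ) ∈ {r : ℝ | ∃ x : Fin n → E,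
      (∀ a : E →L[ℝ] ℝ, ‖a‖ ≤ 1 → ∑ k, |a (x k)| ≤ 1) ∧
      r = W.N (seqOf n fun k => ‖S (x k)‖)} := by
    refine ⟨fun _ => 0, ?_, ?_⟩
    · intro a _; simp
    · simp only [map_zero, norm_zero]
      rw [seqOf_zero]
  exact le_csSup (piN1_bddAbove W S n) h0

lemma hXset_bdd (Y Z : MaxSymSeqSpace) (n : ℕ) (ρ : ℕ → ℝ) (hρ : ∀ k, n ≤ k → ρ k = 0) :
    BddAbove {r : ℝ | ∃ τ : ℕ → ℝ, Y.Mem τ ∧ Y.N τ ≤ 1 ∧ r = Z.N (fun k => ρ k * τ k)} := by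
  refine ⟨∑ k ∈ Finset.range n, |ρ k|, ?_⟩
  rintro r ⟨τ, hmem, hle, rfl⟩
  calc Z.N (fun k => ρ k * τ k)
      ≤ ∑ k ∈ Finset.range n, |ρ k * τ k| := by
        apply Z.toMaxSeqSpace.n_le_sum_abs n
        intro k hk; rw [hρ k hk, zero_mul]
    _ ≤ ∑ k ∈ Finset.range n, |ρ k| := by
        apply Finset.sum_le_sum
        intro i _
        rw [abs_mul]
        calc |ρ i| * |τ i| ≤ |ρ i| * 1 := by
              apply mul_le_mul_of_nonneg_left _ (abs_nonneg _)
              exact (Y.toMaxSeqSpace.coord_le hmem i).trans hle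
          _ = |ρ i| := mul_one _

/-- The key estimate for "pure" (disjointly supported, sub-unit) tuples. -/
lemma pure_bound (X Y Z : MaxSymSeqSpace)
    (hX : ∀ ρ : ℕ → ℝ, X.N ρ =
      sSup {r : ℝ | ∃ τ : ℕ → ℝ, Y.Mem τ ∧ Y.N τ ≤ 1 ∧ r = Z.N (fun k => ρ k * τ k)})
    (T : E →L[ℝ] F) (n : ℕ)
    (R : lp (fun _ : ℕ => ℝ) ⊤ →L[ℝ] E) (hR : ‖R‖ ≤ 1)
    (σ : ℕ → ℝ) (hσmem : Y.Mem σ) (hσ : Y.N σ ≤ 1)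
    (Dσ : lp (fun _ : ℕ => ℝ) ⊤ →L[ℝ] lp (fun _ : ℕ => ℝ) ⊤)
    (hD : ∀ (τ : lp (fun _ : ℕ => ℝ) ⊤) (k : ℕ), (Dσ τ) k = σ k * τ k)
    (p : Fin n → lp (fun _ : ℕ => ℝ) ⊤)
    (hp1 : ∀ k j, |p k j| ≤ 1)
    (hp2 : ∀ (j : ℕ) (k k' : Fin n), p k j ≠ 0 → p k' j ≠ 0 → k = k') :
    Z.N (seqOf n fun k => ‖T (R (Dσ (p k)))‖) ≤ piN1 X.toMaxSeqSpace T n := by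
  classical
  set v : Fin n → ℝ := fun k => ‖T (R (Dσ (p k)))‖ with hv
  have hmain : ∀ δ : ℝ, 0 < δ → δ < 1 →
      (1 - δ) * Z.N (seqOf n v) ≤ piN1 X.toMaxSeqSpace T n := by
    intro δ hδ0 hδ1
    set c : Fin n → ℝ := fun k => ‖Dσ (p k)‖ with hc
    -- selection of near-maximal coordinates
    have hsel : ∀ k : Fin n, 0 < c k → ∃ j : ℕ, (1 - δ) * c k < |σ j * p k j| := by
      intro k hck
      have h1 : (1 - δ) * c k < c k := by nlinarith
      have h2 : c k = ⨆ j, ‖(Dσ (p k)) j‖ := lp.norm_eq_ciSup _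
      rw [h2] at h1
      obtain ⟨j, hj⟩ := exists_lt_of_lt_ciSup h1
      refine ⟨j, ?_⟩
      rw [Real.norm_eq_abs, hD] at hj
      exact hj
    set jsel : Fin n → ℕ := fun k => if h : 0 < c k then (hsel k h).choose else 0 with hjseldef
    have hjsel : ∀ (k : Fin n) (h : 0 < c k),
        (1 - δ) * c k < |σ (jsel k) * p k (jsel k)| := by
      intro k h
      simp only [hjseldef, dif_pos h]
      exact (hsel k h).choose_spec
    have hpne : ∀ (k : Fin n) (h : 0 < c k), p k (jsel k) ≠ 0 := by
      intro k h hzero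
      have := hjsel k h
      rw [hzero, mul_zero, abs_zero] at this
      nlinarith
    -- the finite set and the injection
    set P : Set ℕ := {k' | ∃ h : k' < n, 0 < c ⟨k', h⟩} with hPdef
    have hPfin : P.Finite := by
      apply Set.Finite.subset (Set.finite_Iio n)
      rintro k' ⟨h, _⟩
      exact h
    set fmap : ℕ → ℕ := fun k' => if h : k' < n then jsel ⟨k', h⟩ else 0 with hfmapdef
    have hinj : Set.InjOn fmap P := by
      rintro k1 ⟨h1, hc1⟩ k2 ⟨h2, hc2⟩ heq
      simp only [hfmapdef, dif_pos h1, dif_pos h2] at heq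
      have e1 := hpne ⟨k1, h1⟩ hc1
      have e2 := hpne ⟨k2, h2⟩ hc2
      rw [heq] at e1
      have := hp2 (jsel ⟨k2, h2⟩) ⟨k1, h1⟩ ⟨k2, h2⟩ e1 e2
      exact congrArg Fin.val this
    obtain ⟨π, hπ⟩ := exists_perm_extend hPfin fmap hinj
    -- the multiplier τ
    set τ : ℕ → ℝ := fun k' => if h : k' < n then
        (if 0 < c ⟨k', h⟩ then (1 - δ) * c ⟨k', h⟩ else 0) else 0 with hτdef
    have hσπ := Y.symm σ π hσmem
    have hτmono : ∀ k', |τ k'| ≤ |(σ ∘ π) k'| := by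
      intro k'
      by_cases h : k' < n
      · by_cases hck : 0 < c ⟨k', h⟩
        · have hπk : π k' = jsel ⟨k', h⟩ := by
            have := hπ k' ⟨h, hck⟩
            simpa only [hfmapdef, dif_pos h] using this
          have hτval : τ k' = (1 - δ) * c ⟨k', h⟩ := by
            simp only [hτdef, dif_pos h, if_pos hck]
          have hnn : 0 ≤ (1 - δ) * c ⟨k', h⟩ := by nlinarith [hck.le]
          rw [hτval, abs_of_nonneg hnn, Function.comp_apply, hπk]
          calc (1 - δ) * c ⟨k', h⟩ ≤ |σ (jsel ⟨k', h⟩) * p ⟨k', h⟩ (jsel ⟨k', h⟩)| :=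
                (hjsel ⟨k', h⟩ hck).le
            _ = |σ (jsel ⟨k', h⟩)| * |p ⟨k', h⟩ (jsel ⟨k', h⟩)| := abs_mul _ _
            _ ≤ |σ (jsel ⟨k', h⟩)| * 1 := by
                apply mul_le_mul_of_nonneg_left (hp1 _ _) (abs_nonneg _)
            _ = |σ (jsel ⟨k', h⟩)| := mul_one _
        · simp only [hτdef, dif_pos h, if_neg hck, abs_zero]
          exact abs_nonneg _
      · simp only [hτdef, dif_neg h, abs_zero]
        exact abs_nonneg _
    have hτ := (Y.toMaxSeqSpace).mono hσπ.1 hτmono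
    have hτ1 : Y.N τ ≤ 1 := by
      calc Y.N τ ≤ Y.N (σ ∘ π) := hτ.2
        _ = Y.N σ := hσπ.2
        _ ≤ 1 := hσ
    -- the normalized disjoint family
    set u : Fin n → lp (fun _ : ℕ => ℝ) ⊤ :=
      fun k => if h : 0 < c k then (c k)⁻¹ • Dσ (p k) else 0 with hudef
    have hucoe : ∀ (k : Fin n) (h : 0 < c k) (j : ℕ), u k j = (c k)⁻¹ * (σ j * p k j) := by
      intro k h j
      simp only [hudef, dif_pos h]
      have := congrFun (lp.coeFn_smul ((c k)⁻¹) (Dσ (p k))) j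
      simp only [Pi.smul_apply, smul_eq_mul] at this
      rw [this, hD]
    have hub : ∀ (k : Fin n) (j : ℕ), |u k j| ≤ 1 := by
      intro k j
      by_cases h : 0 < c k
      · rw [hucoe k h j]
        have h1 : |σ j * p k j| ≤ c k := by
          have := lp.norm_apply_le_norm ENNReal.top_ne_zero (Dσ (p k)) j
          rw [Real.norm_eq_abs, hD] at this
          exact this
        rw [abs_mul, abs_inv, abs_of_nonneg h.le]
        have h2 : (c k)⁻¹ * |σ j * p k j| ≤ (c k)⁻¹ * c k :=
          mul_le_mul_of_nonneg_left h1 (inv_nonneg.mpr h.le)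
        rw [inv_mul_cancel₀ (ne_of_gt h)] at h2
        exact h2
      · simp only [hudef, dif_neg h]
        have : ((0 : lp (fun _ : ℕ => ℝ) ⊤) : ∀ _ : ℕ, ℝ) j = 0 := by
          rw [lp.coeFn_zero]; rfl
        rw [this]; simp
    have husupp : ∀ (k : Fin n) (j : ℕ), u k j ≠ 0 → p k j ≠ 0 := by
      intro k j hne
      by_cases h : 0 < c k
      · rw [hucoe k h j] at hne
        intro hz
        rw [hz, mul_zero, mul_zero] at hne
        exact hne rfl
      · exfalso
        apply hne
        simp only [hudef, dif_neg h]
        rw [lp.coeFn_zero]; rfl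
    have hucoord : ∀ j, ∑ k, |u k j| ≤ 1 := by
      intro j
      by_cases hex : ∃ k0 : Fin n, u k0 j ≠ 0
      · obtain ⟨k0, hk0⟩ := hex
        rw [Finset.sum_eq_single k0]
        · exact hub k0 j
        · intro b _ hb
          by_contra hbz
          have hbne : u b j ≠ 0 := by
            intro hz; apply hbz; rw [hz]; simp
          exact hb (hp2 j b k0 (husupp b j hbne) (husupp k0 j hk0))
        · intro h; exact absurd (Finset.mem_univ k0) h
      · push_neg at hex
        have : ∀ k : Fin n, |u k j| = 0 := fun k => by rw [hex k, abs_zero]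
        rw [Finset.sum_congr rfl (fun k _ => this k)]
        simp
    -- the admissible family in E
    set x' : Fin n → E := fun k => R (u k) with hx'def
    have hadm' : ∀ a : E →L[ℝ] ℝ, ‖a‖ ≤ 1 → ∑ k, |a (x' k)| ≤ 1 := by
      intro a ha
      have hcomp : ‖a.comp R‖ ≤ 1 := by
        calc ‖a.comp R‖ ≤ ‖a‖ * ‖R‖ := ContinuousLinearMap.opNorm_comp_le _ _
          _ ≤ 1 * 1 := mul_le_mul ha hR (norm_nonneg _) zero_le_one
          _ = 1 := one_mul 1
      have := adm_of_coord u hucoord (a.comp R) hcomp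
      simpa using this
    set ρ : Fin n → ℝ := fun k => ‖T (x' k)‖ with hρdef
    have hXel : X.N (seqOf n ρ) ≤ piN1 X.toMaxSeqSpace T n :=
      le_piN1 X.toMaxSeqSpace T n x' hadm'
    -- the key identity
    have hkey : (fun k' => (seqOf n ρ) k' * τ k') = (1 - δ) • (seqOf n v) := by
      funext k'
      by_cases h : k' < n
      · simp only [seqOf, dif_pos h, Pi.smul_apply, smul_eq_mul, hτdef]
        by_cases hck : 0 < c ⟨k', h⟩
        · rw [if_pos hck]
          have hval : ρ ⟨k', h⟩ = (c ⟨k', h⟩)⁻¹ * v ⟨k', h⟩ := by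
            simp only [hρdef, hx'def, hudef, dif_pos hck, hv]
            rw [map_smul, map_smul, norm_smul, Real.norm_eq_abs, abs_inv,
              abs_of_nonneg (hck.le)]
          rw [hval]
          field_simp
        · rw [if_neg hck, mul_zero]
          have hc0 : c ⟨k', h⟩ = 0 := le_antisymm (not_lt.mp hck) (norm_nonneg _)
          have : Dσ (p ⟨k', h⟩) = 0 := norm_eq_zero.mp hc0
          have hv0 : v ⟨k', h⟩ = 0 := by
            simp only [hv, this, map_zero, norm_zero]
          rw [hv0, mul_zero]
      · simp only [seqOf, dif_neg h, Pi.smul_apply, smul_eq_mul, zero_mul, mul_zero]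
    -- conclusion
    have h5 : Z.N (fun k' => (seqOf n ρ) k' * τ k') ≤ X.N (seqOf n ρ) := by
      rw [hX (seqOf n ρ)]
      apply le_csSup
      · apply hXset_bdd Y Z n
        intro k hk; simp [seqOf, Nat.not_lt.mpr hk]
      · exact ⟨τ, hτ.1, hτ1, rfl⟩
    have h6 : Z.N ((1 - δ) • (seqOf n v)) = (1 - δ) * Z.N (seqOf n v) := by
      rw [Z.toMaxSeqSpace.n_smul]
      rw [abs_of_nonneg (by linarith : (0:ℝ) ≤ 1 - δ)]
    calc (1 - δ) * Z.N (seqOf n v) = Z.N ((1 - δ) • (seqOf n v)) := h6.symm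
      _ = Z.N (fun k' => (seqOf n ρ) k' * τ k') := by rw [hkey]
      _ ≤ X.N (seqOf n ρ) := h5
      _ ≤ piN1 X.toMaxSeqSpace T n := hXel
  -- remove δ
  by_contra hcon
  push_neg at hcon
  set A := Z.N (seqOf n v) with hA
  set B := piN1 X.toMaxSeqSpace T n with hB
  have hB0 : 0 ≤ B := piN1_nonneg _ _ _
  have hA0 : 0 < A := lt_of_le_of_lt hB0 hcon
  have hδ0 : 0 < (A - B) / (2 * A) := by
    apply div_pos (by linarith) (by linarith)
  have hδ1 : (A - B) / (2 * A) < 1 := by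
    rw [div_lt_one (by linarith)]
    linarith
  have h1 := hmain _ hδ0 hδ1
  have h2 : (1 - (A - B) / (2 * A)) * A = A - (A - B) / 2 := by
    field_simp
  rw [h2] at h1
  linarith

end Part3

lemma piN1_le {E F : Type*} [NormedAddCommGroup E] [NormedSpace ℝ E]
    [NormedAddCommGroup F] [NormedSpace ℝ F]
    (W : MaxSeqSpace) (S : E →L[ℝ] F) (n : ℕ) {b : ℝ} (hb : 0 ≤ b)
    (h : ∀ x : Fin n → E, (∀ a : E →L[ℝ] ℝ, ‖a‖ ≤ 1 → ∑ k, |a (x k)| ≤ 1) →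
      W.N (seqOf n fun k => ‖S (x k)‖) ≤ b) : piN1 W S n ≤ b := by
  unfold piN1
  apply Real.sSup_le _ hb
  rintro r ⟨x, hx, rfl⟩
  exact h x hx


set_option maxHeartbeats 1000000 in
/-- Easy direction of the quotient formula: if `X = DL(Y,Z)`, then for every
`R : ℓ∞ → E` with `‖R‖ ≤ 1` and every `σ ∈ B_Y`,
`π^n_{Z,1}(T ∘ R ∘ D_σ) ≤ π^n_{X,1}(T)`. -/
theorem stmt16 (X Y Z : MaxSymSeqSpace)
    (hX : ∀ ρ : ℕ → ℝ, X.N ρ =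
      sSup {r : ℝ | ∃ τ : ℕ → ℝ, Y.Mem τ ∧ Y.N τ ≤ 1 ∧ r = Z.N (fun k => ρ k * τ k)})
    (E F : Type*) [NormedAddCommGroup E] [NormedSpace ℝ E] [CompleteSpace E]
    [NormedAddCommGroup F] [NormedSpace ℝ F] [CompleteSpace F]
    (T : E →L[ℝ] F) (n : ℕ)
    (R : lp (fun _ : ℕ => ℝ) ⊤ →L[ℝ] E) (hR : ‖R‖ ≤ 1)
    (σ : ℕ → ℝ) (hσmem : Y.Mem σ) (hσ : Y.N σ ≤ 1)
    (Dσ : lp (fun _ : ℕ => ℝ) ⊤ →L[ℝ] lp (fun _ : ℕ => ℝ) ⊤)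
    (hD : ∀ (τ : lp (fun _ : ℕ => ℝ) ⊤) (k : ℕ), (Dσ τ) k = σ k * τ k) :
    piN1 Z.toMaxSeqSpace (T.comp (R.comp Dσ)) n ≤ piN1 X.toMaxSeqSpace T n := by
  classical
  set G := T.comp (R.comp Dσ) with hGdef
  apply piN1_le _ _ _ (piN1_nonneg _ _ _)
  intro x hadm
  -- coordinatewise bound from admissibility
  have hcol : ∀ j, ∑ k, |x k j| ≤ 1 := by
    intro j
    have := hadm (evCLM j) (evCLM_norm_le j)
    simpa [evCLM_apply] using this
  set C := ‖G‖ with hCdef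
  have hC0 : 0 ≤ C := norm_nonneg _
  apply le_of_forall_pos_le_add
  intro ε hε
  obtain ⟨M, hM⟩ := exists_nat_gt ((2 * C * n + 1) / ε)
  have hM0 : 0 < M := by
    by_contra h
    push_neg at h
    interval_cases M
    have : 0 < (2 * C * n + 1) / ε := by positivity
    simp at hM
    linarith
  have hMR : (0:ℝ) < (M:ℝ) := Nat.cast_pos.mpr hM0
  -- the building blocks
  set mab : Fin n → ℕ → ℝ := fun k j => |x k j| with hmabdef
  set sm : Fin n → ℕ → ℝ :=
    fun k j => ∑ k' ∈ Finset.univ.filter (fun k' => k' < k), mab k' j with hsmdef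
  set sg : Fin n → ℕ → ℝ := fun k j => if x k j < 0 then -1 else 1 with hsgdef
  set pf : ℕ → Fin n → ℕ → ℝ := fun t k j =>
    sg k j * (if (M:ℝ) * sm k j ≤ (t:ℝ) ∧ (t:ℝ) < (M:ℝ) * (sm k j + mab k j)
      then 1 else 0) with hpfdef
  have hsg1 : ∀ k j, |sg k j| = 1 := by
    intro k j; simp only [hsgdef]; split <;> simp
  have hpfb : ∀ t k j, |pf t k j| ≤ 1 := by
    intro t k j
    simp only [hpfdef]
    rw [abs_mul, hsg1]
    split <;> simp
  have hpfmem : ∀ t k, Memℓp (pf t k) ⊤ := by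
    intro t k
    apply memℓp_infty
    refine ⟨1, ?_⟩
    rintro y ⟨j, rfl⟩
    simpa [Real.norm_eq_abs] using hpfb t k j
  set P : ℕ → Fin n → lp (fun _ : ℕ => ℝ) ⊤ := fun t k => ⟨pf t k, hpfmem t k⟩ with hPdef
  have hPcoe : ∀ t k j, (P t k) j = pf t k j := fun t k j => rfl
  -- basic positivity facts
  have hmabnn : ∀ k j, 0 ≤ mab k j := fun k j => abs_nonneg _
  have hsmnn : ∀ k j, 0 ≤ sm k j := by
    intro k j
    apply Finset.sum_nonneg
    intro i _; exact hmabnn i j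
  have hsum1 : ∀ k j, sm k j + mab k j ≤ 1 := by
    intro k j
    have h1 : sm k j + mab k j = ∑ k' ∈ insert k (Finset.univ.filter (fun k' => k' < k)),
        mab k' j := by
      rw [Finset.sum_insert (by simp)]
      ring
    rw [h1]
    calc ∑ k' ∈ insert k (Finset.univ.filter (fun k' => k' < k)), mab k' j
        ≤ ∑ k', mab k' j := by
          apply Finset.sum_le_sum_of_subset_of_nonneg (Finset.subset_univ _)
          intro i _ _; exact hmabnn i j
      _ ≤ 1 := hcol j
  have hmono : ∀ (k k' : Fin n) (j : ℕ), k < k' → sm k j + mab k j ≤ sm k' j := by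
    intro k k' j hkk
    have h1 : sm k j + mab k j = ∑ k'' ∈ insert k (Finset.univ.filter (fun k'' => k'' < k)),
        mab k'' j := by
      rw [Finset.sum_insert (by simp)]
      ring
    rw [h1]
    apply Finset.sum_le_sum_of_subset_of_nonneg
    · intro i hi
      simp only [Finset.mem_insert, Finset.mem_filter, Finset.mem_univ, true_and] at hi ⊢
      rcases hi with rfl | hi
      · exact hkk
      · exact lt_trans hi hkk
    · intro i _ _; exact hmabnn i j
  -- purity: disjoint columns
  have hdisj : ∀ (j : ℕ) (t : ℕ) (k k' : Fin n),
      (P t k) j ≠ 0 → (P t k') j ≠ 0 → k = k' := by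
    intro j t k k' h1 h2
    rw [hPcoe] at h1 h2
    have hcond : ∀ kk : Fin n, pf t kk j ≠ 0 →
        (M:ℝ) * sm kk j ≤ (t:ℝ) ∧ (t:ℝ) < (M:ℝ) * (sm kk j + mab kk j) := by
      intro kk hkk
      simp only [hpfdef] at hkk
      by_contra hc
      rw [if_neg hc, mul_zero] at hkk
      exact hkk rfl
    have c1 := hcond k h1
    have c2 := hcond k' h2
    by_contra hne
    rcases lt_trichotomy k k' with hlt | heq | hgt
    · have := hmono k k' j hlt
      have h3 : (M:ℝ) * (sm k j + mab k j) ≤ (M:ℝ) * sm k' j :=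
        mul_le_mul_of_nonneg_left this hMR.le
      linarith [c1.2, c2.1]
    · exact hne heq
    · have := hmono k' k j hgt
      have h3 : (M:ℝ) * (sm k' j + mab k' j) ≤ (M:ℝ) * sm k j :=
        mul_le_mul_of_nonneg_left this hMR.le
      linarith [c2.2, c1.1]
  -- the averaging estimate
  have havg : ∀ (k : Fin n) (j : ℕ),
      |x k j - (M:ℝ)⁻¹ * ∑ t ∈ Finset.range M, pf t k j| ≤ 2 / M := by
    intro k j
    have hsum : ∑ t ∈ Finset.range M, pf t k j
        = sg k j * (((Finset.range M).filter
            (fun t : ℕ => (M:ℝ) * sm k j ≤ (t:ℝ) ∧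
              (t:ℝ) < (M:ℝ) * (sm k j + mab k j))).card : ℝ) := by
      simp only [hpfdef]
      rw [← Finset.mul_sum]
      congr 1
      rw [Finset.sum_boole]
    have hxkj : x k j = sg k j * mab k j := by
      simp only [hsgdef, hmabdef]
      split
      · rename_i hh; rw [abs_of_neg hh]; ring
      · rename_i hh; rw [abs_of_nonneg (not_lt.mp hh)]; ring
    have hcb := count_bound M (sm k j) (mab k j) (hsmnn k j) (hmabnn k j) (hsum1 k j)
    set cd := (((Finset.range M).filter
            (fun t : ℕ => (M:ℝ) * sm k j ≤ (t:ℝ) ∧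
              (t:ℝ) < (M:ℝ) * (sm k j + mab k j))).card : ℝ) with hcddef
    rw [hsum, hxkj]
    have heq : sg k j * mab k j - (M:ℝ)⁻¹ * (sg k j * cd)
        = sg k j * ((M:ℝ) * mab k j - cd) / M := by
      field_simp
    rw [heq, abs_div, abs_mul, hsg1, one_mul, abs_of_pos hMR]
    rw [div_le_div_iff₀ hMR hMR]
    have h5 : |(M:ℝ) * mab k j - cd| ≤ 2 := by
      rw [abs_sub_comm]
      exact hcb
    exact mul_le_mul_of_nonneg_right h5 hMR.le
  -- norm of the defect
  have hDnorm : ∀ k : Fin n,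
      ‖x k - (M:ℝ)⁻¹ • ∑ t ∈ Finset.range M, P t k‖ ≤ 2 / M := by
    intro k
    apply lp.norm_le_of_forall_le (by positivity)
    intro j
    have hco : (x k - (M:ℝ)⁻¹ • ∑ t ∈ Finset.range M, P t k) j
        = x k j - (M:ℝ)⁻¹ * ∑ t ∈ Finset.range M, pf t k j := by
      have h1 := congrFun (lp.coeFn_sub (x k) ((M:ℝ)⁻¹ • ∑ t ∈ Finset.range M, P t k)) j
      simp only [Pi.sub_apply] at h1
      rw [h1]
      congr 1
      have h2 := congrFun (lp.coeFn_smul ((M:ℝ)⁻¹) (∑ t ∈ Finset.range M, P t k)) j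
      simp only [Pi.smul_apply, smul_eq_mul] at h2
      rw [h2]
      congr 1
      have h3 := congrFun (lp.coeFn_sum (fun t => P t k) (Finset.range M)) j
      rw [h3, Finset.sum_apply]
    rw [hco, Real.norm_eq_abs]
    exact havg k j
  -- splitting the operator values
  have hsplit : ∀ k : Fin n, ‖G (x k)‖ ≤
      (M:ℝ)⁻¹ * ∑ t ∈ Finset.range M, ‖G (P t k)‖ + C * (2 / M) := by
    intro k
    have hxk : x k = (M:ℝ)⁻¹ • (∑ t ∈ Finset.range M, P t k)
        + (x k - (M:ℝ)⁻¹ • ∑ t ∈ Finset.range M, P t k) := by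
      abel
    calc ‖G (x k)‖ = ‖G ((M:ℝ)⁻¹ • (∑ t ∈ Finset.range M, P t k))
          + G (x k - (M:ℝ)⁻¹ • ∑ t ∈ Finset.range M, P t k)‖ := by
          rw [← map_add]
          congr 1
          exact congrArg _ hxk
      _ ≤ ‖G ((M:ℝ)⁻¹ • (∑ t ∈ Finset.range M, P t k))‖
          + ‖G (x k - (M:ℝ)⁻¹ • ∑ t ∈ Finset.range M, P t k)‖ := norm_add_le _ _
      _ ≤ (M:ℝ)⁻¹ * ∑ t ∈ Finset.range M, ‖G (P t k)‖ + C * (2 / M) := by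
          apply add_le_add
          · rw [map_smul, norm_smul, Real.norm_eq_abs, abs_of_pos (inv_pos.mpr hMR),
              map_sum]
            apply mul_le_mul_of_nonneg_left (norm_sum_le _ _) (inv_pos.mpr hMR).le
          · calc ‖G (x k - (M:ℝ)⁻¹ • ∑ t ∈ Finset.range M, P t k)‖
                ≤ C * ‖x k - (M:ℝ)⁻¹ • ∑ t ∈ Finset.range M, P t k‖ := G.le_opNorm _
              _ ≤ C * (2 / M) := mul_le_mul_of_nonneg_left (hDnorm k) hC0
  -- the Z.N chain
  set Bnd : Fin n → ℝ := fun k =>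
    (M:ℝ)⁻¹ * ∑ t ∈ Finset.range M, ‖G (P t k)‖ + C * (2 / M) with hBnddef
  have hBndnn : ∀ k, 0 ≤ Bnd k := by
    intro k
    simp only [hBnddef]
    have h1 : 0 ≤ ∑ t ∈ Finset.range M, ‖G (P t k)‖ :=
      Finset.sum_nonneg fun t _ => norm_nonneg _
    positivity
  have step1 : Z.N (seqOf n fun k => ‖G (x k)‖) ≤ Z.N (seqOf n Bnd) := by
    apply (Z.toMaxSeqSpace.mono (Z.toMaxSeqSpace.mem_seqOf n Bnd) ?_).2
    intro i
    by_cases h : i < n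
    · simp only [seqOf, dif_pos h]
      rw [abs_of_nonneg (norm_nonneg _), abs_of_nonneg (hBndnn _)]
      exact hsplit _
    · simp [seqOf, dif_neg h]
  have step2 : seqOf n Bnd = (M:ℝ)⁻¹ • (∑ t ∈ Finset.range M,
        seqOf n (fun k => ‖G (P t k)‖)) + (C * (2 / M)) • (seqOf n fun _ => (1:ℝ)) := by
    funext i
    by_cases h : i < n
    · simp only [seqOf, Pi.add_apply, Pi.smul_apply, Finset.sum_apply, dif_pos h,
        smul_eq_mul, hBnddef, mul_one]
    · simp only [seqOf, Pi.add_apply, Pi.smul_apply, Finset.sum_apply, dif_neg h,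
        smul_eq_mul, mul_zero, add_zero, Finset.sum_const_zero]
  have hmemsum : Z.Mem (∑ t ∈ Finset.range M, seqOf n (fun k => ‖G (P t k)‖)) :=
    Z.toMaxSeqSpace.mem_finset_sum _ _ fun t _ => Z.toMaxSeqSpace.mem_seqOf n _
  have step3 : Z.N (seqOf n Bnd) ≤ (M:ℝ)⁻¹ * ∑ t ∈ Finset.range M,
      Z.N (seqOf n (fun k => ‖G (P t k)‖)) + (C * (2 / M)) * Z.N (seqOf n fun _ => (1:ℝ)) := by
    rw [step2]
    calc Z.N ((M:ℝ)⁻¹ • (∑ t ∈ Finset.range M, seqOf n (fun k => ‖G (P t k)‖))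
          + (C * (2 / M)) • (seqOf n fun _ => (1:ℝ)))
        ≤ Z.N ((M:ℝ)⁻¹ • (∑ t ∈ Finset.range M, seqOf n (fun k => ‖G (P t k)‖)))
          + Z.N ((C * (2 / M)) • (seqOf n fun _ => (1:ℝ))) := by
          apply Z.toMaxSeqSpace.n_add
          · exact Z.toMaxSeqSpace.mem_smul _ hmemsum
          · exact Z.toMaxSeqSpace.mem_smul _ (Z.toMaxSeqSpace.mem_seqOf n _)
      _ ≤ (M:ℝ)⁻¹ * ∑ t ∈ Finset.range M, Z.N (seqOf n (fun k => ‖G (P t k)‖))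
          + (C * (2 / M)) * Z.N (seqOf n fun _ => (1:ℝ)) := by
          rw [Z.toMaxSeqSpace.n_smul, Z.toMaxSeqSpace.n_smul]
          apply add_le_add
          · rw [abs_of_pos (inv_pos.mpr hMR)]
            apply mul_le_mul_of_nonneg_left
              (Z.toMaxSeqSpace.n_finset_sum_le _ _ fun t _ => Z.toMaxSeqSpace.mem_seqOf n _)
              (inv_pos.mpr hMR).le
          · rw [abs_of_nonneg (by positivity : (0:ℝ) ≤ C * (2 / M))]
  have step4 : ∀ t ∈ Finset.range M,
      Z.N (seqOf n (fun k => ‖G (P t k)‖)) ≤ piN1 X.toMaxSeqSpace T n := by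
    intro t _
    have := pure_bound X Y Z hX T n R hR σ hσmem hσ Dσ hD (P t)
      (fun k j => by rw [hPcoe]; exact hpfb t k j)
      (fun j k k' h1 h2 => hdisj j t k k' h1 h2)
    convert this using 3
    rfl
  have step5 : Z.N (seqOf n fun _ => (1:ℝ)) ≤ n := by
    calc Z.N (seqOf n fun _ => (1:ℝ))
        ≤ ∑ k ∈ Finset.range n, |seqOf n (fun _ => (1:ℝ)) k| := by
          apply Z.toMaxSeqSpace.n_le_sum_abs n
          intro k hk; simp [seqOf, Nat.not_lt.mpr hk]
      _ ≤ ∑ _k ∈ Finset.range n, 1 := by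
          apply Finset.sum_le_sum
          intro i hi
          have : i < n := Finset.mem_range.mp hi
          simp [seqOf, this]
      _ = n := by simp
  -- assembling
  have hsum4 : ∑ t ∈ Finset.range M, Z.N (seqOf n (fun k => ‖G (P t k)‖))
      ≤ M * piN1 X.toMaxSeqSpace T n := by
    calc ∑ t ∈ Finset.range M, Z.N (seqOf n (fun k => ‖G (P t k)‖))
        ≤ ∑ _t ∈ Finset.range M, piN1 X.toMaxSeqSpace T n := Finset.sum_le_sum step4
      _ = M * piN1 X.toMaxSeqSpace T n := by
          rw [Finset.sum_const, Finset.card_range, nsmul_eq_mul]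
  have hfinal : Z.N (seqOf n fun k => ‖G (x k)‖)
      ≤ piN1 X.toMaxSeqSpace T n + C * (2 / M) * n := by
    calc Z.N (seqOf n fun k => ‖G (x k)‖) ≤ Z.N (seqOf n Bnd) := step1
      _ ≤ (M:ℝ)⁻¹ * ∑ t ∈ Finset.range M, Z.N (seqOf n (fun k => ‖G (P t k)‖))
          + (C * (2 / M)) * Z.N (seqOf n fun _ => (1:ℝ)) := step3
      _ ≤ (M:ℝ)⁻¹ * (M * piN1 X.toMaxSeqSpace T n) + (C * (2 / M)) * n := by
          apply add_le_add
          · exact mul_le_mul_of_nonneg_left hsum4 (inv_pos.mpr hMR).le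
          · apply mul_le_mul_of_nonneg_left step5 (by positivity)
      _ = piN1 X.toMaxSeqSpace T n + C * (2 / M) * n := by
          rw [← mul_assoc, inv_mul_cancel₀ (ne_of_gt hMR), one_mul]
  have herr : C * (2 / M) * n ≤ ε := by
    have h1 : (2 * C * n + 1) / ε < M := hM
    have h2 : 2 * C * n + 1 < M * ε := by
      rw [div_lt_iff₀ hε] at h1
      linarith
    have h3 : C * (2 / M) * n = 2 * C * n / M := by ring
    rw [h3, div_le_iff₀ hMR]
    have h4 : (M:ℝ) * ε = ε * (M:ℝ) := mul_comm _ _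
    linarith
  calc Z.N (seqOf n fun k => ‖G (x k)‖) ≤ piN1 X.toMaxSeqSpace T n + C * (2 / M) * n :=
        hfinal
    _ ≤ piN1 X.toMaxSeqSpace T n + ε := by linarith


end
end

section
/- Let 1 ≤ p < ∞ and let X be a maximal sequence space such that the expression σ ↦ ‖|σ|^{1/p}‖_X^p (coordinatewise powers) is equivalent to a norm on the cone of nonnegative sequences. Then X is p-convex: there exists c with ‖(Σ_{j=1}^n |x_j|^p)^{1/p}‖_X ≤ c (Σ_{j=1}^n ‖x_j‖_X^p)^{1/p} for all finite families in X. -/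
/-- If `σ ↦ ‖|σ|^{1/p}‖_X^p` is equivalent to a norm `Nm` on the cone of
nonnegative sequences, then `X` is `p`-convex. -/
theorem stmt19 (p : ℝ) (hp : 1 ≤ p) (X : MaxSeqSpace)
    (Nm : (ℕ → ℝ) → ℝ) (c₀ : ℝ) (hc₀ : 1 ≤ c₀)
    (hadd : ∀ σ τ : ℕ → ℝ, (∀ k, 0 ≤ σ k) → (∀ k, 0 ≤ τ k) →
      Nm (σ + τ) ≤ Nm σ + Nm τ)
    (hhom : ∀ (t : ℝ) (σ : ℕ → ℝ), 0 ≤ t → (∀ k, 0 ≤ σ k) →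
      Nm (t • σ) = t * Nm σ)
    (hequiv : ∀ σ : ℕ → ℝ, (∀ k, 0 ≤ σ k) →
      Nm σ / c₀ ≤ X.N (fun k => σ k ^ (1/p)) ^ p ∧
      X.N (fun k => σ k ^ (1/p)) ^ p ≤ c₀ * Nm σ) :
    ∃ c : ℝ, 0 < c ∧ ∀ (n : ℕ) (x : Fin n → ℕ → ℝ), (∀ j, X.Mem (x j)) →
      X.N (fun k => (∑ j, |x j k| ^ p) ^ (1/p)) ≤ c * (∑ j, X.N (x j) ^ p) ^ (1/p) := by
  have hp0 : (0:ℝ) < p := lt_of_lt_of_le one_pos hp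
  have hpne : p ≠ 0 := ne_of_gt hp0
  have hc₀0 : (0:ℝ) < c₀ := lt_of_lt_of_le one_pos hc₀
  have hNm0 : Nm 0 = 0 := by
    have := hhom 0 0 le_rfl (fun k => le_rfl)
    simpa using this
  refine ⟨c₀ ^ 2, by positivity, ?_⟩
  intro n x hx
  set σ : Fin n → ℕ → ℝ := fun j k => |x j k| ^ p with hσ
  have hσnn : ∀ j k, 0 ≤ σ j k := fun j k => Real.rpow_nonneg (abs_nonneg _) p
  -- subadditivity of Nm over finite sums
  have hsum_nn : ∀ (s : Finset (Fin n)) (k : ℕ), 0 ≤ (∑ j ∈ s, σ j) k := by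
    intro s k
    rw [Finset.sum_apply]
    exact Finset.sum_nonneg fun j _ => hσnn j k
  have hNmsum : ∀ s : Finset (Fin n), Nm (∑ j ∈ s, σ j) ≤ ∑ j ∈ s, Nm (σ j) := by
    intro s
    induction s using Finset.induction_on with
    | empty => simpa using hNm0.le
    | @insert a s ha ih =>
      rw [Finset.sum_insert ha, Finset.sum_insert ha]
      calc Nm (σ a + ∑ j ∈ s, σ j) ≤ Nm (σ a) + Nm (∑ j ∈ s, σ j) :=
            hadd _ _ (hσnn a) (hsum_nn s)
        _ ≤ Nm (σ a) + ∑ j ∈ s, Nm (σ j) := by linarith [ih]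
  -- Nm (σ j) ≤ c₀ * X.N (x j) ^ p
  have hNmj : ∀ j, Nm (σ j) ≤ c₀ * X.N (x j) ^ p := by
    intro j
    have h1 := (hequiv (σ j) (hσnn j)).1
    have heq : (fun k => σ j k ^ (1/p)) = fun k => |x j k| := by
      funext k
      show (|x j k| ^ p) ^ (1/p) = |x j k|
      rw [← Real.rpow_mul (abs_nonneg _), mul_one_div_cancel hpne, Real.rpow_one]
    rw [heq] at h1
    -- X.N |x j| ≤ X.N (x j)
    have habs : X.N (fun k => |x j k|) ≤ X.N (x j) := by
      have hs := X.solid (fun k => if x j k < 0 then -1 else 1) (x j) (hx j)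
        (fun k => by by_cases h : x j k < 0 <;> simp [h])
      have : ((fun k => if x j k < 0 then (-1:ℝ) else 1) * x j) = fun k => |x j k| := by
        funext k
        by_cases h : x j k < 0
        · simp [h, abs_of_neg h]
        · simp [h, abs_of_nonneg (not_lt.1 h)]
      rw [this] at hs
      exact hs.2
    have h2 : X.N (fun k => |x j k|) ^ p ≤ X.N (x j) ^ p :=
      Real.rpow_le_rpow (X.n_nonneg _) habs hp0.le
    have h3 : Nm (σ j) / c₀ ≤ X.N (x j) ^ p := le_trans h1 h2
    calc Nm (σ j) = c₀ * (Nm (σ j) / c₀) := by field_simp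
      _ ≤ c₀ * X.N (x j) ^ p := by
          exact mul_le_mul_of_nonneg_left h3 hc₀0.le
  -- main chain
  set S : ℝ := ∑ j, X.N (x j) ^ p with hS
  have hSnn : 0 ≤ S := Finset.sum_nonneg fun j _ => Real.rpow_nonneg (X.n_nonneg _) p
  have hkey : X.N (fun k => (∑ j, |x j k| ^ p) ^ (1/p)) ^ p ≤ c₀ ^ 2 * S := by
    have hσsum : (fun k => (∑ j, σ j) k ^ (1/p)) =
        fun k => (∑ j, |x j k| ^ p) ^ (1/p) := by
      funext k; rw [Finset.sum_apply]
    have h1 := (hequiv (∑ j, σ j) (hsum_nn Finset.univ)).2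
    rw [hσsum] at h1
    calc X.N (fun k => (∑ j, |x j k| ^ p) ^ (1/p)) ^ p
        ≤ c₀ * Nm (∑ j, σ j) := h1
      _ ≤ c₀ * ∑ j, Nm (σ j) := by
          refine mul_le_mul_of_nonneg_left (hNmsum Finset.univ) hc₀0.le
      _ ≤ c₀ * ∑ j, (c₀ * X.N (x j) ^ p) := by
          refine mul_le_mul_of_nonneg_left (Finset.sum_le_sum fun j _ => hNmj j) hc₀0.le
      _ = c₀ ^ 2 * S := by rw [← Finset.mul_sum]; ring
  -- take p-th roots
  have hNnn : 0 ≤ X.N (fun k => (∑ j, |x j k| ^ p) ^ (1/p)) := X.n_nonneg _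
  have hroot : X.N (fun k => (∑ j, |x j k| ^ p) ^ (1/p)) ≤ (c₀ ^ 2 * S) ^ (1/p) := by
    have := Real.rpow_le_rpow (Real.rpow_nonneg hNnn p) hkey (by positivity : (0:ℝ) ≤ 1/p)
    rwa [← Real.rpow_mul hNnn, mul_one_div_cancel hpne, Real.rpow_one] at this
  have hc2 : (1:ℝ) ≤ c₀ ^ 2 := one_le_pow₀ hc₀
  calc X.N (fun k => (∑ j, |x j k| ^ p) ^ (1/p))
      ≤ (c₀ ^ 2 * S) ^ (1/p) := hroot
    _ = (c₀ ^ 2) ^ (1/p) * S ^ (1/p) := Real.mul_rpow (by positivity) hSnn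
    _ ≤ c₀ ^ 2 * S ^ (1/p) := by
        refine mul_le_mul_of_nonneg_right ?_ (Real.rpow_nonneg hSnn _)
        calc (c₀ ^ 2) ^ (1/p) ≤ (c₀ ^ 2) ^ (1:ℝ) :=
              Real.rpow_le_rpow_of_exponent_le hc2 (by
                rw [div_le_one hp0]; exact hp)
          _ = c₀ ^ 2 := Real.rpow_one _
end
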